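/- arXiv:1909.02281 — 5 statements merged into one kernel-verified Lean document; each statement's English description precedes it below -/
import Mathlib

section
/- Let X be a Banach lattice with order continuous norm and S a convex C₀-semigroup on X with generator A. Then A is closed: for every sequence (x_n)_{n∈ℕ} in D(A) with x_n → x ∈ X and A x_n → y ∈ X in norm, one has x ∈ D(A) and Ax = y. -/
open Filter Topology Set

variable {X : Type*} [NormedAddCommGroup X] [Lattice X] [IsOrderedAddMonoid X] [HasSolidNorm X] [NormedSpace ℝ X] [CompleteSpace X]

/-- Domain of the generator of a semigroup `S`. -/
def genDom (S : ℝ → X → X) : Set X :=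
  {x : X | ∃ z : X, Tendsto (fun h : ℝ => h⁻¹ • (S h x - x)) (𝓝[>] (0 : ℝ)) (𝓝 z)}

/-!
A convex operator on a Banach lattice that is bounded on a ball is Lipschitz on the half ball:
`T v - T u` is squeezed between two chords whose length is comparable to `‖v - u‖`, and the norm
is solid. Together with Baire's theorem this makes the `S t`, `0 ≤ t ≤ δ`, uniformly Lipschitz
near `x`.

Convexity also squeezes the increment `S (s + τ) u - S s u = S s (u + τ • v) - S s u`, where
`v → A u` as `τ → 0`, between `τ` times the difference quotients of `S s` at `u` in direction
`A u` with steps `-η` and `η`. For `u = xₙ` with `n` large these quotients are, uniformly in `s`,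
close to those at `x` in direction `y`, which tend to `y` as `s → 0`. A mean value inequality for
right Dini derivatives then gives `‖S h xₙ - xₙ - h • y‖ ≤ ε h` for all small `h`, uniformly in
large `n`, and `n → ∞` yields `‖S h x - x - h • y‖ ≤ ε h`.
-/

open Metric
open scoped NNReal

section NormedLattice

variable {E : Type*} [NormedAddCommGroup E] [Lattice E] [IsOrderedAddMonoid E] [HasSolidNorm E]

theorem norm_le_add_of_le_of_le {a b c : E} (hac : a ≤ c) (hcb : c ≤ b) : ‖c‖ ≤ ‖a‖ + ‖b‖ := by
  have hc : |c| ≤ |a| + |b| := abs_le'.2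
    ⟨hcb.trans ((le_abs_self b).trans (le_add_of_nonneg_left (abs_nonneg a))),
      (neg_le_neg hac).trans ((neg_le_abs a).trans (le_add_of_nonneg_right (abs_nonneg b)))⟩
  calc ‖c‖ ≤ ‖|a| + |b|‖ :=
        HasSolidNorm.solid (by rwa [abs_of_nonneg (by positivity : (0 : E) ≤ |a| + |b|)])
    _ ≤ ‖|a|‖ + ‖|b|‖ := norm_add_le _ _
    _ = ‖a‖ + ‖b‖ := by rw [norm_abs_eq_norm, norm_abs_eq_norm]

end NormedLattice

noncomputable def diffQuot {F β : Type*} [AddCommGroup F] [SMul ℝ F] [AddCommGroup β]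
    [SMul ℝ β] (T : F → β) (u v : F) (η : ℝ) : β :=
  η⁻¹ • (T (u + η • v) - T u)

section ConvexMaps

variable {F β : Type*} [AddCommGroup F] [Module ℝ F]
  [AddCommGroup β] [PartialOrder β] [IsOrderedAddMonoid β] [Module ℝ β] {T : F → β}

theorem ConvexOn.map_add_smul_sub_sub_le (hT : ConvexOn ℝ univ T) {a : ℝ} (ha₀ : 0 ≤ a)
    (ha₁ : a ≤ 1) (u w : F) : T (u + a • (w - u)) - T u ≤ a • (T w - T u) := by
  have h := hT.2 (mem_univ u) (mem_univ w) (sub_nonneg.2 ha₁) ha₀ (sub_add_cancel 1 a)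
  rw [show (1 - a) • u + a • w = u + a • (w - u) by module] at h
  calc T (u + a • (w - u)) - T u ≤ (1 - a) • T u + a • T w - T u := sub_le_sub_right h _
    _ = a • (T w - T u) := by module

theorem ConvexOn.map_add_smul_sub_le_smul_diffQuot (hT : ConvexOn ℝ univ T) {τ η : ℝ}
    (hτ : 0 ≤ τ) (hτη : τ ≤ η) (hη : 0 < η) (u v : F) :
    T (u + τ • v) - T u ≤ τ • diffQuot T u v η := by
  have h := hT.map_add_smul_sub_sub_le (div_nonneg hτ hη.le) ((div_le_one hη).2 hτη) u
    (u + η • v)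
  rw [add_sub_cancel_left, smul_smul, div_mul_cancel₀ _ hη.ne'] at h
  rwa [diffQuot, smul_smul, ← div_eq_mul_inv]

theorem ConvexOn.smul_diffQuot_neg_le [PosSMulMono ℝ β] (hT : ConvexOn ℝ univ T) {τ η : ℝ}
    (hτ : 0 ≤ τ) (hη : 0 < η) (u v : F) :
    τ • diffQuot T u v (-η) ≤ T (u + τ • v) - T u := by
  have hητ : 0 < η + τ := by positivity
  -- `u` lies on the chord from `u + τ • v` to `u - η • v`
  have h := hT.map_add_smul_sub_sub_le (div_nonneg hτ hητ.le)
    ((div_le_one hητ).2 (by linarith)) (u + τ • v) (u + (-η) • v)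
  have hu : u + τ • v + (τ / (η + τ)) • (u + (-η) • v - (u + τ • v)) = u := by
    match_scalars <;> field_simp <;> ring
  rw [hu] at h
  have key := smul_nonneg (div_nonneg hητ.le hη.le) (sub_nonneg.2 h)
  refine sub_nonneg.1 (key.trans_eq ?_)
  rw [diffQuot]
  match_scalars <;> field_simp <;> ring

end ConvexMaps

section ConvexMapsToNormedSpace

variable {F E : Type*} [NormedAddCommGroup F] [NormedSpace ℝ F]
  [NormedAddCommGroup E] [PartialOrder E] [IsOrderedAddMonoid E] [NormedSpace ℝ E] {T : F → E}

theorem ConvexOn.exists_sub_le_of_norm_le (hT : ConvexOn ℝ univ T) {c u v : F} {R C : ℝ}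
    (hR : 0 < R) (hC : ∀ w ∈ closedBall c (2 * R), ‖T w‖ ≤ C) (hu : u ∈ closedBall c R)
    (hv : v ∈ closedBall c R) : ∃ z, T v - T u ≤ z ∧ ‖z‖ ≤ 2 * C * ‖v - u‖ / R := by
  rcases eq_or_ne v u with rfl | hne
  · exact ⟨0, (sub_self _).le, by simp⟩
  set d := ‖v - u‖
  have hd : 0 < d := norm_pos_iff.2 (sub_ne_zero.2 hne)
  -- `v` divides the segment from `u` to the point `w` at distance `R` beyond `v`
  set w := v + (R / d) • (v - u)
  have hw : w ∈ closedBall c (2 * R) := by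
    rw [mem_closedBall, dist_eq_norm] at hv ⊢
    calc ‖w - c‖ ≤ ‖v - c‖ + ‖(R / d) • (v - u)‖ := by
          rw [show w - c = (v - c) + (R / d) • (v - u) by simp only [w]; abel]
          exact norm_add_le _ _
      _ ≤ R + R := by
          rw [norm_smul, Real.norm_of_nonneg (by positivity), div_mul_cancel₀ _ hd.ne']
          linarith
      _ = 2 * R := by ring
  have hv' : u + (d / (d + R)) • (w - u) = v := by
    simp only [w]; match_scalars <;> field_simp; ring
  refine ⟨(d / (d + R)) • (T w - T u), ?_, ?_⟩
  · simpa only [hv'] using hT.map_add_smul_sub_sub_le (a := d / (d + R)) (by positivity)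
      ((div_le_one (by positivity)).2 (by linarith)) u w
  · have hTw : ‖T w - T u‖ ≤ 2 * C := by
      linarith [norm_sub_le (T w) (T u), hC w hw,
        hC u (closedBall_subset_closedBall (by linarith) hu)]
    rw [norm_smul, Real.norm_of_nonneg (by positivity)]
    calc d / (d + R) * ‖T w - T u‖ ≤ d / R * (2 * C) :=
          mul_le_mul (div_le_div_of_nonneg_left hd.le hR (by linarith)) hTw (norm_nonneg _)
            (by positivity)
      _ = 2 * C * d / R := by ring

end ConvexMapsToNormedSpace

section ConvexMapsToNormedLattice

variable {F E : Type*} [NormedAddCommGroup F] [NormedSpace ℝ F]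
  [NormedAddCommGroup E] [Lattice E] [IsOrderedAddMonoid E] [HasSolidNorm E] [NormedSpace ℝ E]
  {T : F → E}

theorem ConvexOn.norm_map_add_smul_sub_sub_smul_le [PosSMulMono ℝ E] (hT : ConvexOn ℝ univ T)
    {τ η : ℝ} (hτ : 0 ≤ τ) (hτη : τ ≤ η) (hη : 0 < η) (u v : F) (y : E) :
    ‖T (u + τ • v) - T u - τ • y‖ ≤ τ * (‖diffQuot T u v (-η) - y‖ + ‖diffQuot T u v η - y‖) := by
  have hlo : τ • (diffQuot T u v (-η) - y) ≤ T (u + τ • v) - T u - τ • y := by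
    rw [smul_sub]; exact sub_le_sub_right (hT.smul_diffQuot_neg_le hτ hη u v) _
  have hup : T (u + τ • v) - T u - τ • y ≤ τ • (diffQuot T u v η - y) := by
    rw [smul_sub]; exact sub_le_sub_right (hT.map_add_smul_sub_le_smul_diffQuot hτ hτη hη u v) _
  calc _ ≤ ‖τ • (diffQuot T u v (-η) - y)‖ + ‖τ • (diffQuot T u v η - y)‖ :=
        norm_le_add_of_le_of_le hlo hup
    _ = _ := by rw [norm_smul, norm_smul, Real.norm_of_nonneg hτ, mul_add]

theorem ConvexOn.eventually_norm_map_add_smul_sub_sub_smul_lt [PosSMulMono ℝ E]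
    (hT : ConvexOn ℝ univ T) (hTc : Continuous T) {v : ℝ → F} {u z : F} {y : E} {η r : ℝ}
    (hv : Tendsto v (𝓝[>] 0) (𝓝 z)) (hη : 0 < η)
    (hr : ‖diffQuot T u z (-η) - y‖ + ‖diffQuot T u z η - y‖ < r) :
    ∀ᶠ τ in 𝓝[>] 0, ‖T (u + τ • v τ) - T u - τ • y‖ < r * τ := by
  have hcont : Continuous fun w => ‖diffQuot T u w (-η) - y‖ + ‖diffQuot T u w η - y‖ := by
    unfold diffQuot; fun_prop
  filter_upwards [(hcont.tendsto z).comp hv |>.eventually (gt_mem_nhds hr), Ioo_mem_nhdsGT hη]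
    with τ hτr hτ
  calc _ ≤ τ * (‖diffQuot T u (v τ) (-η) - y‖ + ‖diffQuot T u (v τ) η - y‖) :=
        hT.norm_map_add_smul_sub_sub_smul_le hτ.1.le hτ.2.le hη u (v τ) y
    _ < τ * r := mul_lt_mul_of_pos_left hτr hτ.1
    _ = r * τ := mul_comm _ _

theorem ConvexOn.lipschitzOnWith_of_norm_le (hT : ConvexOn ℝ univ T) {c : F} {R C : ℝ}
    (hR : 0 < R) (hC : ∀ w ∈ closedBall c (2 * R), ‖T w‖ ≤ C) :
    LipschitzOnWith (4 * C / R).toNNReal T (closedBall c R) := by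
  have hC₀ : 0 ≤ C := (norm_nonneg _).trans (hC c (mem_closedBall_self (by positivity)))
  refine LipschitzOnWith.of_dist_le_mul fun v hv u hu => ?_
  obtain ⟨z₁, hz₁, hn₁⟩ := hT.exists_sub_le_of_norm_le hR hC hu hv
  obtain ⟨z₂, hz₂, hn₂⟩ := hT.exists_sub_le_of_norm_le hR hC hv hu
  rw [dist_eq_norm, dist_eq_norm, Real.coe_toNNReal _ (by positivity)]
  calc ‖T v - T u‖ ≤ ‖-z₂‖ + ‖z₁‖ :=
        norm_le_add_of_le_of_le (neg_le.2 (by rwa [neg_sub])) hz₁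
    _ ≤ 2 * C * ‖u - v‖ / R + 2 * C * ‖v - u‖ / R := by
        rw [norm_neg]; exact add_le_add hn₂ hn₁
    _ = 4 * C / R * ‖v - u‖ := by rw [norm_sub_rev u v]; ring

theorem ConvexOn.continuous_of_norm_le (hT : ConvexOn ℝ univ T)
    (hb : ∀ r, 0 < r → ∃ M, ∀ u, ‖u‖ ≤ r → ‖T u‖ ≤ M) : Continuous T := by
  refine continuous_iff_continuousAt.2 fun p => ?_
  obtain ⟨M, hM⟩ := hb (‖p‖ + 2) (by positivity)
  have hC : ∀ w ∈ closedBall p (2 * 1), ‖T w‖ ≤ M := fun w hw => hM w <| by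
    rw [mem_closedBall, dist_eq_norm] at hw
    linarith [norm_le_norm_add_norm_sub' w p]
  exact (hT.lipschitzOnWith_of_norm_le one_pos hC).continuousOn.continuousAt
    (closedBall_mem_nhds p one_pos)

theorem ConvexOn.norm_le_of_forall_mem_ball_norm_le [PosSMulMono ℝ E] (hT : ConvexOn ℝ univ T)
    {u₀ x u : F} {ρ M : ℝ} (hM : ∀ w ∈ ball u₀ ρ, ‖T w‖ ≤ M) (hu : u ∈ ball x (ρ / 2)) :
    ‖T u‖ ≤ 3 * M + ‖T ((2 : ℝ) • x - u₀)‖ + ‖T ((2 : ℝ) • u₀ - x)‖ := by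
  rw [mem_ball, dist_eq_norm] at hu
  have hρ : 0 < ρ := by linarith [norm_nonneg (u - x)]
  have hM₀ : 0 ≤ M := (norm_nonneg _).trans (hM u₀ (mem_ball_self hρ))
  have hmid : ∀ p q,
      T ((1 / 2 : ℝ) • p + (1 / 2 : ℝ) • q) ≤ (1 / 2 : ℝ) • T p + (1 / 2 : ℝ) • T q :=
    fun p q => hT.2 trivial trivial (by norm_num) (by norm_num) (by norm_num)
  set q := (2 : ℝ) • x - u₀
  set q' := (2 : ℝ) • u₀ - x
  -- `u` is the midpoint of `q` and `2 • u - q ∈ ball u₀ ρ`, and the midpoint of `u` and `q'`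
  -- lies in `ball u₀ ρ`: this bounds `T u` from above and from below
  have hp : ‖T ((2 : ℝ) • u - q)‖ ≤ M := hM _ <| by
    rw [mem_ball, dist_eq_norm, show (2 : ℝ) • u - q - u₀ = (2 : ℝ) • (u - x) by module,
      norm_smul]
    norm_num; linarith
  have hm : ‖T ((1 / 2 : ℝ) • u + (1 / 2 : ℝ) • q')‖ ≤ M := hM _ <| by
    rw [mem_ball, dist_eq_norm,
      show (1 / 2 : ℝ) • u + (1 / 2 : ℝ) • q' - u₀ = (1 / 2 : ℝ) • (u - x) by module, norm_smul]
    norm_num; linarith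
  have hup : T u ≤ (1 / 2 : ℝ) • T ((2 : ℝ) • u - q) + (1 / 2 : ℝ) • T q := by
    simpa only [show (1 / 2 : ℝ) • ((2 : ℝ) • u - q) + (1 / 2 : ℝ) • q = u by module]
      using hmid ((2 : ℝ) • u - q) q
  have hlo : (2 : ℝ) • T ((1 / 2 : ℝ) • u + (1 / 2 : ℝ) • q') - T q' ≤ T u := by
    have h := smul_le_smul_of_nonneg_left (hmid u q') (zero_le_two (α := ℝ))
    rw [show (2 : ℝ) • ((1 / 2 : ℝ) • T u + (1 / 2 : ℝ) • T q') = T u + T q' by module] at h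
    exact sub_le_iff_le_add.2 h
  calc ‖T u‖ ≤ ‖(2 : ℝ) • T ((1 / 2 : ℝ) • u + (1 / 2 : ℝ) • q') - T q'‖
        + ‖(1 / 2 : ℝ) • T ((2 : ℝ) • u - q) + (1 / 2 : ℝ) • T q‖ :=
          norm_le_add_of_le_of_le hlo hup
    _ ≤ (2 * M + ‖T q'‖) + (1 / 2 * M + 1 / 2 * ‖T q‖) := by
        gcongr
        · refine (norm_sub_le _ _).trans ?_
          rw [norm_smul]; norm_num; linarith
        · refine (norm_add_le _ _).trans ?_
          rw [norm_smul, norm_smul]; norm_num; linarith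
    _ ≤ 3 * M + ‖T q‖ + ‖T q'‖ := by linarith [norm_nonneg (T q)]

end ConvexMapsToNormedLattice

theorem LipschitzOnWith.norm_diffQuot_sub_diffQuot_le {F G : Type*} [NormedAddCommGroup F]
    [NormedSpace ℝ F] [NormedAddCommGroup G] [NormedSpace ℝ G] {T : F → G} {L : ℝ≥0} {s : Set F}
    (hT : LipschitzOnWith L T s) {u u' v v' : F} {η : ℝ} (hu : u ∈ s) (hu' : u' ∈ s)
    (hv : u + η • v ∈ s) (hv' : u' + η • v' ∈ s) :
    ‖diffQuot T u v η - diffQuot T u' v' η‖ ≤ L * (2 * ‖u - u'‖ / |η| + ‖v - v'‖) := by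
  rcases eq_or_ne η 0 with rfl | hη
  · simp only [diffQuot, inv_zero, zero_smul, sub_self, norm_zero]; positivity
  have hη' : 0 < |η| := abs_pos.2 hη
  rw [diffQuot, diffQuot, ← smul_sub, norm_smul, norm_inv, Real.norm_eq_abs,
    show T (u + η • v) - T u - (T (u' + η • v') - T u')
      = (T (u + η • v) - T (u' + η • v')) - (T u - T u') by abel]
  have h₁ := hT.norm_sub_le hv hv'
  have h₂ := hT.norm_sub_le hu hu'
  have h₃ : ‖u + η • v - (u' + η • v')‖ ≤ ‖u - u'‖ + |η| * ‖v - v'‖ := by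
    rw [show u + η • v - (u' + η • v') = (u - u') + η • (v - v') by module, ← Real.norm_eq_abs,
      ← norm_smul]
    exact norm_add_le _ _
  calc |η|⁻¹ * ‖T (u + η • v) - T (u' + η • v') - (T u - T u')‖
      ≤ |η|⁻¹ * (L * (‖u - u'‖ + |η| * ‖v - v'‖) + L * ‖u - u'‖) := by
        gcongr
        refine (_root_.norm_sub_le _ _).trans (add_le_add (h₁.trans ?_) h₂)
        gcongr
    _ = L * (2 * ‖u - u'‖ / |η| + ‖v - v'‖) := by field_simp; ring

theorem norm_sub_le_mul_of_frequently_norm_sub_lt {G : Type*} [NormedAddCommGroup G]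
    {φ : ℝ → G} {a b K : ℝ} (hab : a ≤ b) (hφ : ContinuousOn φ (Icc a b))
    (hK : ∀ s ∈ Ico a b, ∀ r > K, ∃ᶠ τ in 𝓝[>] 0, ‖φ (s + τ) - φ s‖ < r * τ) :
    ‖φ b - φ a‖ ≤ K * (b - a) := by
  refine image_le_of_liminf_slope_right_le_deriv_boundary (f := fun s => ‖φ s - φ a‖)
    (B := fun s => K * (s - a)) (B' := fun _ => K) (hφ.sub continuousOn_const).norm (by simp)
    (by fun_prop) (fun s _ => ?_) (fun s hs r hr => ?_) ⟨hab, le_rfl⟩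
  · simpa using ((hasDerivAt_id s).sub_const a).const_mul K |>.hasDerivWithinAt
  have hshift : Tendsto (fun τ => s + τ) (𝓝[>] 0) (𝓝[>] s) :=
    tendsto_nhdsWithin_of_tendsto_nhds_of_eventually_within _
      (by simpa using ((continuous_const_add s).tendsto 0).mono_left nhdsWithin_le_nhds)
      (eventually_nhdsWithin_of_forall fun τ (hτ : 0 < τ) => by simpa using hτ)
  refine hshift.frequently ((hK s hs r hr).mp (eventually_nhdsWithin_of_forall
    fun τ (hτ : 0 < τ) hlt => ?_))
  rw [slope_def_field, add_sub_cancel_left, div_lt_iff₀ hτ]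
  calc ‖φ (s + τ) - φ a‖ - ‖φ s - φ a‖ ≤ ‖φ (s + τ) - φ s‖ := by
        simpa using norm_sub_norm_le (φ (s + τ) - φ a) (φ s - φ a)
    _ < r * τ := hlt

theorem tendsto_inv_smul_nhdsGT_of_eventually_norm_sub_smul_le {G : Type*} [NormedAddCommGroup G]
    [NormedSpace ℝ G] {f : ℝ → G} {y : G}
    (h : ∀ ε > 0, ∀ᶠ t in 𝓝[>] 0, ‖f t - t • y‖ ≤ ε * t) :
    Tendsto (fun t => t⁻¹ • f t) (𝓝[>] 0) (𝓝 y) := by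
  refine tendsto_iff_norm_sub_tendsto_zero.2 <| Metric.tendsto_nhds.2 fun ε hε => ?_
  filter_upwards [h (ε / 2) (by positivity), self_mem_nhdsWithin] with t ht (htpos : 0 < t)
  rw [Real.dist_0_eq_abs, abs_norm, show t⁻¹ • f t - y = t⁻¹ • (f t - t • y) by
    rw [smul_sub, inv_smul_smul₀ htpos.ne'], norm_smul,
    Real.norm_of_nonneg (inv_nonneg.2 htpos.le)]
  calc t⁻¹ * ‖f t - t • y‖ ≤ t⁻¹ * (ε / 2 * t) := by gcongr
    _ < ε := by field_simp; linarith

structure IsConvexC0Semigroup {E : Type*} [NormedAddCommGroup E] [PartialOrder E]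
    [Module ℝ E] (S : ℝ → E → E) : Prop where
  convexOn : ∀ t, 0 ≤ t → ConvexOn ℝ univ (S t)
  bounded : ∀ t, 0 ≤ t → ∀ r, 0 < r → ∃ M, ∀ x, ‖x‖ ≤ r → ‖S t x‖ ≤ M
  map_zero : ∀ x, S 0 x = x
  map_add : ∀ s t, 0 ≤ s → 0 ≤ t → ∀ x, S (t + s) x = S t (S s x)
  tendsto_nhdsGT : ∀ x, Tendsto (fun t => S t x) (𝓝[>] 0) (𝓝 x)

namespace IsConvexC0Semigroup

section OrderedSpace

variable {E : Type*} [NormedAddCommGroup E] [PartialOrder E] [NormedSpace ℝ E] {S : ℝ → E → E}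

theorem tendsto_nhdsGE (hS : IsConvexC0Semigroup S) (u : E) :
    Tendsto (fun t => S t u) (𝓝[≥] 0) (𝓝 u) := by
  rw [← Ioi_insert, nhdsWithin_insert, tendsto_sup]
  exact ⟨by simpa [hS.map_zero] using tendsto_pure_nhds (fun t => S t u) 0, hS.tendsto_nhdsGT u⟩

theorem tendsto_diffQuot (hS : IsConvexC0Semigroup S) (u v : E) {η : ℝ} (hη : η ≠ 0) :
    Tendsto (fun s => diffQuot (S s) u v η) (𝓝[≥] 0) (𝓝 v) := by
  have h := ((hS.tendsto_nhdsGE (u + η • v)).sub (hS.tendsto_nhdsGE u)).const_smul η⁻¹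
  rwa [add_sub_cancel_left, inv_smul_smul₀ hη] at h

theorem continuousOn_orbit (hS : IsConvexC0Semigroup S) {x u : E} {r δ : ℝ} {L : ℝ≥0}
    (hL : ∀ t ∈ Icc 0 δ, LipschitzOnWith L (S t) (closedBall x r)) (hu : u ∈ ball x r) :
    ContinuousOn (fun s => S s u) (Icc 0 δ) := by
  refine (Metric.uniformContinuousOn_iff_le.2 fun ε hε => ?_).continuousOn
  have hev : ∀ᶠ τ in 𝓝[≥] 0, S τ u ∈ ball x r ∩ ball u (ε / (L + 1)) :=
    (hS.tendsto_nhdsGE u).eventually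
      (inter_mem (isOpen_ball.mem_nhds hu) (ball_mem_nhds u (by positivity)))
  obtain ⟨η, hη, hsub⟩ := mem_nhdsGE_iff_exists_Icc_subset.1 hev
  have key : ∀ a ∈ Icc 0 δ, ∀ b ∈ Icc 0 δ, a ≤ b → b - a ≤ η → dist (S a u) (S b u) ≤ ε := by
    intro a ha b hb hab hba
    obtain ⟨hmem, hdist⟩ := hsub ⟨sub_nonneg.2 hab, hba⟩
    have hb' : S b u = S a (S (b - a) u) := by
      rw [← hS.map_add _ _ (sub_nonneg.2 hab) ha.1, add_sub_cancel]
    rw [hb', dist_comm]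
    calc dist (S a (S (b - a) u)) (S a u) ≤ L * dist (S (b - a) u) u :=
          (hL a ha).dist_le_mul _ (ball_subset_closedBall hmem) _ (ball_subset_closedBall hu)
      _ ≤ L * (ε / (L + 1)) := by gcongr; exact (mem_ball.1 hdist).le
      _ ≤ ε := by
          rw [mul_div_assoc', div_le_iff₀ (by positivity)]; nlinarith [L.coe_nonneg]
  refine ⟨η, hη, fun a ha b hb hab => ?_⟩
  rw [Real.dist_eq, abs_le] at hab
  rcases le_total a b with h | h
  · exact key a ha b hb h (by linarith)
  · rw [dist_comm]; exact key b hb a ha h (by linarith)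

end OrderedSpace

variable {E : Type*} [NormedAddCommGroup E] [Lattice E] [IsOrderedAddMonoid E] [HasSolidNorm E]
  [NormedSpace ℝ E] {S : ℝ → E → E}

theorem continuous (hS : IsConvexC0Semigroup S) {t : ℝ} (ht : 0 ≤ t) : Continuous (S t) :=
  (hS.convexOn t ht).continuous_of_norm_le (hS.bounded t ht)

theorem exists_eventually_norm_le [CompleteSpace E] [PosSMulMono ℝ E]
    (hS : IsConvexC0Semigroup S) (x : E) :
    ∃ ρ > 0, ∃ C, ∀ᶠ t in 𝓝[≥] 0, ∀ u ∈ ball x ρ, ‖S t u‖ ≤ C := by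
  have hpt : ∀ v, ∀ᶠ t in 𝓝[≥] 0, ‖S t v‖ < ‖v‖ + 1 := fun v =>
    (hS.tendsto_nhdsGE v).norm.eventually (gt_mem_nhds (lt_add_one _))
  -- Baire gives a ball on which the `S t` with small `t` are uniformly bounded; convexity
  -- carries the bound over to a ball around `x`
  set H : ℕ × ℕ → Set E := fun mk => {u | ∀ t ∈ Icc 0 (1 / (mk.2 + 1 : ℝ)), ‖S t u‖ ≤ mk.1}
  have hH : ∀ mk, IsClosed (H mk) := fun mk => by
    simp only [H, ofPred_forall]
    exact isClosed_biInter fun t ht => isClosed_le (hS.continuous ht.1).norm continuous_const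
  have hcover : ⋃ mk, H mk = univ := eq_univ_of_forall fun v => by
    obtain ⟨δ, hδ, hsub⟩ := mem_nhdsGE_iff_exists_Icc_subset.1 (hpt v)
    obtain ⟨k, hk⟩ := exists_nat_one_div_lt hδ
    exact mem_iUnion.2 ⟨(⌈‖v‖ + 1⌉₊, k), fun t ht =>
      (hsub ⟨ht.1, ht.2.trans hk.le⟩ : ‖S t v‖ < ‖v‖ + 1).le.trans (Nat.le_ceil _)⟩
  obtain ⟨⟨m, k⟩, u₀, hu₀⟩ := nonempty_interior_of_iUnion_of_closed hH hcover
  obtain ⟨ρ, hρ, hball⟩ := Metric.isOpen_iff.1 isOpen_interior u₀ hu₀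
  refine ⟨ρ / 2, by positivity,
    3 * m + (‖(2 : ℝ) • x - u₀‖ + 1) + (‖(2 : ℝ) • u₀ - x‖ + 1), ?_⟩
  filter_upwards [Icc_mem_nhdsGE (show (0 : ℝ) < 1 / (k + 1) by positivity),
    hpt ((2 : ℝ) • x - u₀), hpt ((2 : ℝ) • u₀ - x)] with t ht h₁ h₂ u hu
  have hM : ∀ w ∈ ball u₀ ρ, ‖S t w‖ ≤ m := fun w hw => interior_subset (hball hw) t ht
  linarith [(hS.convexOn t ht.1).norm_le_of_forall_mem_ball_norm_le hM hu]

theorem exists_eventually_lipschitzOnWith [CompleteSpace E] [PosSMulMono ℝ E]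
    (hS : IsConvexC0Semigroup S) (x : E) :
    ∃ r > 0, ∃ L, ∀ᶠ t in 𝓝[≥] 0, LipschitzOnWith L (S t) (closedBall x r) := by
  obtain ⟨ρ, hρ, C, hC⟩ := hS.exists_eventually_norm_le x
  refine ⟨ρ / 4, by positivity, (4 * C / (ρ / 4)).toNNReal, ?_⟩
  filter_upwards [hC, self_mem_nhdsWithin] with t hCt (ht : 0 ≤ t)
  exact (hS.convexOn t ht).lipschitzOnWith_of_norm_le (by positivity) fun w hw =>
    hCt w (closedBall_subset_ball (by linarith) hw)

theorem norm_map_sub_sub_smul_le [PosSMulMono ℝ E] (hS : IsConvexC0Semigroup S) {u z y : E}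
    {η K h : ℝ} (hu : Tendsto (fun τ => τ⁻¹ • (S τ u - u)) (𝓝[>] 0) (𝓝 z)) (hη : 0 < η)
    (hh : 0 ≤ h) (hcont : ContinuousOn (fun s => S s u) (Icc 0 h))
    (hK : ∀ s ∈ Ico 0 h, ‖diffQuot (S s) u z (-η) - y‖ + ‖diffQuot (S s) u z η - y‖ ≤ K) :
    ‖S h u - u - h • y‖ ≤ K * h := by
  have hmvi := norm_sub_le_mul_of_frequently_norm_sub_lt (φ := fun s => S s u - s • y) (K := K)
    hh (hcont.sub (continuousOn_id.smul continuousOn_const)) fun s hs r hr => ?_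
  · simpa [hS.map_zero, sub_right_comm] using hmvi
  have hev := (hS.convexOn s hs.1).eventually_norm_map_add_smul_sub_sub_smul_lt
    (hS.continuous hs.1) hu hη ((hK s hs).trans_lt hr)
  refine Eventually.frequently ?_
  filter_upwards [hev, self_mem_nhdsWithin] with τ hτ (hτpos : 0 < τ)
  rw [smul_inv_smul₀ hτpos.ne', add_sub_cancel, ← hS.map_add τ s hτpos.le hs.1] at hτ
  convert hτ using 2
  rw [add_smul]; abel

theorem tendsto_inv_smul_sub_of_tendsto [CompleteSpace E] [PosSMulMono ℝ E]
    (hS : IsConvexC0Semigroup S) {xs zs : ℕ → E} {x y : E}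
    (hxs : ∀ n, Tendsto (fun τ => τ⁻¹ • (S τ (xs n) - xs n)) (𝓝[>] 0) (𝓝 (zs n)))
    (hx : Tendsto xs atTop (𝓝 x)) (hz : Tendsto zs atTop (𝓝 y)) :
    Tendsto (fun h => h⁻¹ • (S h x - x)) (𝓝[>] 0) (𝓝 y) := by
  refine tendsto_inv_smul_nhdsGT_of_eventually_norm_sub_smul_le fun ε hε => ?_
  obtain ⟨r, hr, L, hL⟩ := hS.exists_eventually_lipschitzOnWith x
  set η := r / (‖y‖ + 1)
  have hη : 0 < η := by positivity
  have hxy : ∀ σ, |σ| = η → x + σ • y ∈ ball x r := fun σ hσ => by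
    rw [mem_ball, dist_eq_norm, add_sub_cancel_left, norm_smul, Real.norm_eq_abs, hσ,
      div_mul_eq_mul_div, div_lt_iff₀ (by positivity)]
    nlinarith [norm_nonneg y]
  have hsmall := hL.and
    ((Metric.tendsto_nhds.1 (hS.tendsto_diffQuot x y hη.ne') (ε / 4) (by positivity)).and
      (Metric.tendsto_nhds.1 (hS.tendsto_diffQuot x y (neg_ne_zero.2 hη.ne')) (ε / 4)
        (by positivity)))
  obtain ⟨h₁, hh₁, hsub⟩ := mem_nhdsGE_iff_exists_Icc_subset.1 hsmall
  have hcmp : Tendsto (fun n => (L : ℝ) * (2 * ‖xs n - x‖ / η + ‖zs n - y‖)) atTop (𝓝 0) := by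
    simpa using (((hx.sub_const x).norm.const_mul 2).div_const η |>.add
      (hz.sub_const y).norm).const_mul (L : ℝ)
  have hlarge : ∀ᶠ n in atTop, xs n ∈ ball x r ∧ xs n + η • zs n ∈ ball x r ∧
      xs n + (-η) • zs n ∈ ball x r ∧ L * (2 * ‖xs n - x‖ / η + ‖zs n - y‖) < ε / 4 :=
    (hx.eventually (isOpen_ball.mem_nhds (mem_ball_self hr))).and <|
      ((hx.add (hz.const_smul η)).eventually
        (isOpen_ball.mem_nhds (hxy η (abs_of_pos hη)))).and <|
      ((hx.add (hz.const_smul (-η))).eventually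
        (isOpen_ball.mem_nhds (hxy (-η) (by rw [abs_neg, abs_of_pos hη])))).and <|
      hcmp.eventually (gt_mem_nhds (by positivity))
  have horbit : ∀ᶠ n in atTop, ∀ h ∈ Icc 0 h₁, ‖S h (xs n) - xs n - h • y‖ ≤ ε * h := by
    filter_upwards [hlarge] with n ⟨hn, hnη, hnη', hnL⟩ h hh
    refine hS.norm_map_sub_sub_smul_le (hxs n) hη hh.1
      (hS.continuousOn_orbit (fun t ht => (hsub ⟨ht.1, ht.2.trans hh.2⟩).1) hn) fun s hs => ?_
    obtain ⟨hLs, hsη, hsη'⟩ := hsub ⟨hs.1, hs.2.le.trans hh.2⟩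
    have key : ∀ σ, |σ| = η → xs n + σ • zs n ∈ ball x r →
        dist (diffQuot (S s) x y σ) y < ε / 4 → ‖diffQuot (S s) (xs n) (zs n) σ - y‖ ≤ ε / 2 := by
      intro σ hσ hmem hq
      have hq' := hLs.norm_diffQuot_sub_diffQuot_le (ball_subset_closedBall hn)
        (mem_closedBall_self hr.le) (ball_subset_closedBall hmem)
        (ball_subset_closedBall (hxy σ hσ))
      rw [hσ] at hq'
      rw [dist_eq_norm] at hq
      linarith [norm_sub_le_norm_sub_add_norm_sub (diffQuot (S s) (xs n) (zs n) σ)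
        (diffQuot (S s) x y σ) y]
    linarith [key η (abs_of_pos hη) hnη hsη, key (-η) (by rw [abs_neg, abs_of_pos hη]) hnη' hsη']
  filter_upwards [Ioc_mem_nhdsGT hh₁] with h hh
  have hlim : Tendsto (fun n => ‖S h (xs n) - xs n - h • y‖) atTop (𝓝 ‖S h x - x - h • y‖) :=
    ((((hS.continuous hh.1.le).tendsto x).comp hx).sub hx |>.sub_const (h • y)).norm
  exact le_of_tendsto hlim (horbit.mono fun n hn => hn h ⟨hh.1.le, hh.2⟩)

end IsConvexC0Semigroup

theorem generator_closed_general
    [PosSMulStrictMono ℝ X]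
    (S : ℝ → X → X)
    (hconv : ∀ t : ℝ, 0 ≤ t → ∀ x y : X, ∀ a : ℝ, 0 ≤ a → a ≤ 1 →
      S t (a • x + (1 - a) • y) ≤ a • S t x + (1 - a) • S t y)
    (hbdd : ∀ t : ℝ, 0 ≤ t → ∀ r : ℝ, 0 < r → ∃ M : ℝ, ∀ x : X, ‖x‖ ≤ r → ‖S t x‖ ≤ M)
    (hid : ∀ x : X, S 0 x = x)
    (hsg : ∀ s t : ℝ, 0 ≤ s → 0 ≤ t → ∀ x : X, S (t + s) x = S t (S s x))
    (hc0 : ∀ x : X, Tendsto (fun t : ℝ => S t x) (𝓝[>] (0 : ℝ)) (𝓝 x))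
    (A : X → X)
    (hA : ∀ x ∈ genDom S, Tendsto (fun h : ℝ => h⁻¹ • (S h x - x)) (𝓝[>] (0 : ℝ)) (𝓝 (A x)))
    (xs : ℕ → X) (hxs : ∀ n, xs n ∈ genDom S)
    (x y : X) (hx : Tendsto xs atTop (𝓝 x)) (hy : Tendsto (fun n => A (xs n)) atTop (𝓝 y)) :
    x ∈ genDom S ∧ A x = y := by
  have hS : IsConvexC0Semigroup S :=
    ⟨fun t ht => ⟨convex_univ, fun u _ v _ a b ha hb hab => by
      obtain rfl : b = 1 - a := by linarith
      exact hconv t ht u v a ha (by linarith)⟩, hbdd, hid, hsg, hc0⟩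
  have hxy : Tendsto (fun h : ℝ => h⁻¹ • (S h x - x)) (𝓝[>] 0) (𝓝 y) :=
    hS.tendsto_inv_smul_sub_of_tendsto (fun n => hA _ (hxs n)) hx hy
  exact ⟨⟨y, hxy⟩, tendsto_nhds_unique (hA x ⟨y, hxy⟩) hxy⟩

/-- The generator of a convex C₀-semigroup on a Banach lattice with order
continuous norm is closed: if `xₙ ∈ D(A)`, `xₙ → x` and `Axₙ → y` in norm, then
`x ∈ D(A)` and `Ax = y`. -/
theorem generator_closed
    [PosSMulStrictMono ℝ X] [PosSMulReflectLT ℝ X]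
    (hDed : ∀ f : ℕ → X, BddAbove (Set.range f) → ∃ s : X, IsLUB (Set.range f) s)
    (hoc : ∀ f : ℕ → X, Antitone f → IsGLB (Set.range f) 0 →
      Tendsto (fun n => ‖f n‖) atTop (𝓝 (0 : ℝ)))
    (S : ℝ → X → X)
    (hconv : ∀ t : ℝ, 0 ≤ t → ∀ x y : X, ∀ a : ℝ, 0 ≤ a → a ≤ 1 →
      S t (a • x + (1 - a) • y) ≤ a • S t x + (1 - a) • S t y)
    (hbdd : ∀ t : ℝ, 0 ≤ t → ∀ r : ℝ, 0 < r → ∃ M : ℝ, ∀ x : X, ‖x‖ ≤ r → ‖S t x‖ ≤ M)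
    (hid : ∀ x : X, S 0 x = x)
    (hsg : ∀ s t : ℝ, 0 ≤ s → 0 ≤ t → ∀ x : X, S (t + s) x = S t (S s x))
    (hc0 : ∀ x : X, Tendsto (fun t : ℝ => S t x) (𝓝[>] (0 : ℝ)) (𝓝 x))
    (A : X → X)
    (hA : ∀ x ∈ genDom S, Tendsto (fun h : ℝ => h⁻¹ • (S h x - x)) (𝓝[>] (0 : ℝ)) (𝓝 (A x)))
    (xs : ℕ → X) (hxs : ∀ n, xs n ∈ genDom S)
    (x y : X) (hx : Tendsto xs atTop (𝓝 x)) (hy : Tendsto (fun n => A (xs n)) atTop (𝓝 y)) :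
    x ∈ genDom S ∧ A x = y :=
  generator_closed_general S hconv hbdd hid hsg hc0 A hA xs hxs x y hx hy
end

section
/- Let X be a Dedekind complete Banach lattice with order continuous norm and let (S_λ)_{λ∈Λ} be a nonempty family of convex monotone semigroups on X. Assume that for every h > 0 and x ∈ X the set {S_λ(h)x : λ ∈ Λ} is bounded above, and let J_h x := sup_{λ∈Λ} S_λ(h)x (with J_0 := id). Assume further that for every t ≥ 0 there is a bounded operator C(t) : X → X with J_π x ≤ C(t)x for all π ∈ P_t and x ∈ X. Define S(t)x := sup_{π ∈ P_t} J_π x. Then: (a) S = (S(t))_{t≥0} is a convex monotone semigroup on X; (b) S is an upper bound of the family, i.e., S_λ(t)x ≤ S(t)x for all λ ∈ Λ, t ≥ 0, x ∈ X; (c) S is the semigroup envelope, i.e., if T is any semigroup on X with S_λ(t)x ≤ T(t)x for all λ, t, x, then S(t)x ≤ T(t)x for all t, x; (d) if moreover ‖C(t)x − x‖ → 0 as t ↓ 0 for all x ∈ X and S_{λ₀} is a C₀-semigroup for some λ₀ ∈ Λ, then S is a C₀-semigroup; (e) if every S_λ is sublinear, then S is sublinear. -/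
open Filter Topology Set

variable {X : Type*} [NormedAddCommGroup X] [Lattice X] [HasSolidNorm X] [IsOrderedAddMonoid X] [NormedSpace ℝ X] [CompleteSpace X]

/-- Iterated application of the one-step Nisio operators along a list of (time) increments:
for `l = [h₁, h₂, …, hₘ]`, `nisioIter J l x = J h₁ (J h₂ (⋯ (J hₘ x)))`, corresponding to
`J_π` for the partition `π = {0 = t₀ < t₁ < ⋯ < tₘ}` with increments `hⱼ = tⱼ − t_{j−1}`. -/
def nisioIter (J : ℝ → X → X) : List ℝ → X → X
  | [], x => x
  | h :: l, x => J h (nisioIter J l x)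

/-!
Each one-step operator `J h = sup_λ S_λ(h)` is monotone, convex and squeezed between `S_λ₀(h)`
and `C(h)`, hence bounded and therefore continuous. Because every `S_λ` is a semigroup,
`J (a + b) ≤ J a ∘ J b`, so refining a partition can only increase `J_π`: the sets
`{J_π x : π ∈ P_t}` are upward directed, and splitting a partition of `t + s` at `s` gives
`S(t + s) ≤ S(t) S(s)`. Order continuity of the norm makes the supremum of an upward directed
set a norm limit of its elements; continuity of `J_π` then lets it pass through the supremum
defining `S(s) x`, which gives `S(t) S(s) ≤ S(t + s)`. Minimality and domination come from
comparing `J_π` with semigroups along the same partition.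
-/

section SolidNorm

variable {E : Type*} [NormedAddCommGroup E] [Lattice E] [HasSolidNorm E] [IsOrderedAddMonoid E]

theorem norm_le_norm_add_norm_of_le_of_le {a b c : E} (hab : a ≤ b) (hbc : b ≤ c) :
    ‖b‖ ≤ ‖a‖ + ‖c‖ := by
  have habs : |b| ≤ |a| + |c| := abs_le'.2
    ⟨hbc.trans ((le_abs_self c).trans (le_add_of_nonneg_left (abs_nonneg a))),
      (neg_le_neg hab).trans ((neg_le_abs a).trans (le_add_of_nonneg_right (abs_nonneg c)))⟩
  calc ‖b‖ ≤ ‖|a| + |c|‖ := norm_le_norm_of_abs_le_abs <| by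
        rwa [abs_of_nonneg (add_nonneg (abs_nonneg a) (abs_nonneg c))]
    _ ≤ ‖a‖ + ‖c‖ := (norm_add_le _ _).trans_eq (by rw [norm_abs_eq_norm, norm_abs_eq_norm])

theorem HasSolidNorm.tendsto_of_tendsto_of_tendsto_of_le_of_le {α : Type*} {l : Filter α}
    {f g k : α → E} {a : E} (hf : Tendsto f l (𝓝 a)) (hk : Tendsto k l (𝓝 a))
    (hfg : ∀ᶠ t in l, f t ≤ g t) (hgk : ∀ᶠ t in l, g t ≤ k t) : Tendsto g l (𝓝 a) := by
  rw [tendsto_iff_norm_sub_tendsto_zero] at hf hk ⊢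
  refine squeeze_zero' (Eventually.of_forall fun _ => norm_nonneg _) ?_ (by simpa using hf.add hk)
  filter_upwards [hfg, hgk] with t h₁ h₂
  exact norm_le_norm_add_norm_of_le_of_le (sub_le_sub_right h₁ a) (sub_le_sub_right h₂ a)

def IsBoundedOnBalls {F G : Type*} [Norm F] [Norm G] (S : F → G) : Prop :=
  ∀ r : ℝ, 0 < r → ∃ M : ℝ, ∀ x : F, ‖x‖ ≤ r → ‖S x‖ ≤ M

theorem IsBoundedOnBalls.of_le_of_le {F : Type*} [Norm F] {f g k : F → E}
    (hf : IsBoundedOnBalls f) (hk : IsBoundedOnBalls k) (hfg : ∀ x, f x ≤ g x)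
    (hgk : ∀ x, g x ≤ k x) : IsBoundedOnBalls g := fun r hr => by
  obtain ⟨M₁, hM₁⟩ := hf r hr
  obtain ⟨M₂, hM₂⟩ := hk r hr
  exact ⟨M₁ + M₂, fun x hx => (norm_le_norm_add_norm_of_le_of_le (hfg x) (hgk x)).trans
    (add_le_add (hM₁ x hx) (hM₂ x hx))⟩

end SolidNorm

section OrderContinuity

def IsDedekindComplete (E : Type*) [Preorder E] : Prop :=
  ∀ s : Set E, s.Nonempty → BddAbove s → ∃ b : E, IsLUB s b

def HasSigmaOrderContinuousNorm (E : Type*) [Norm E] [Preorder E] [Zero E] : Prop :=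
  ∀ f : ℕ → E, Antitone f → IsGLB (range f) 0 → Tendsto (fun n => ‖f n‖) atTop (𝓝 (0 : ℝ))

section PartialOrder

variable {E : Type*} [NormedAddCommGroup E] [PartialOrder E] [IsOrderedAddMonoid E]

theorem HasSigmaOrderContinuousNorm.tendsto_of_monotone (hoc : HasSigmaOrderContinuousNorm E)
    {a : ℕ → E} (ha : Monotone a) {c : E} (hc : IsLUB (range a) c) :
    Tendsto a atTop (𝓝 c) := by
  have hglb : IsGLB (range fun n => c - a n) 0 := by
    refine ⟨forall_mem_range.2 fun n => sub_nonneg.2 (hc.1 (mem_range_self n)), fun w hw => ?_⟩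
    have : c ≤ c - w :=
      hc.2 (forall_mem_range.2 fun n => le_sub_comm.1 (hw (mem_range_self n)))
    simpa using this
  have := hoc _ (fun m n hmn => sub_le_sub_left (ha hmn) c) hglb
  rw [tendsto_iff_norm_sub_tendsto_zero]
  simpa [norm_sub_rev] using this

/-- Otherwise an increasing sequence in `D` with jumps larger than `δ` would have a supremum,
to which it converges in norm. -/
theorem exists_forall_le_norm_sub_le (hDed : IsDedekindComplete E)
    (hoc : HasSigmaOrderContinuousNorm E) {D : Set E} (hne : D.Nonempty) (hbdd : BddAbove D)
    {δ : ℝ} (hδ : 0 < δ) : ∃ x ∈ D, ∀ y ∈ D, x ≤ y → ‖y - x‖ ≤ δ := by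
  by_contra! hjump
  choose! f hfD hle hfar using hjump
  obtain ⟨x₀, hx₀⟩ := hne
  set a : ℕ → E := fun n => f^[n] x₀
  have ha_succ : ∀ n, a (n + 1) = f (a n) := fun n => Function.iterate_succ_apply' f n x₀
  have haD : ∀ n, a n ∈ D := fun n => by
    induction n with
    | zero => exact hx₀
    | succ n ih => rw [ha_succ]; exact hfD _ ih
  have ha : Monotone a := monotone_nat_of_le_succ fun n => by rw [ha_succ]; exact hle _ (haD n)
  obtain ⟨c, hc⟩ := hDed (range a) (range_nonempty a) (hbdd.mono (range_subset_iff.2 haD))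
  have hlim := hoc.tendsto_of_monotone ha hc
  have hstep : Tendsto (fun n => ‖a (n + 1) - a n‖) atTop (𝓝 0) := by
    simpa using ((hlim.comp (tendsto_add_atTop_nat 1)).sub hlim).norm
  obtain ⟨n, hn⟩ := (hstep.eventually (gt_mem_nhds hδ)).exists
  exact (hfar _ (haD n)).not_ge (by rw [← ha_succ]; exact hn.le)

end PartialOrder

variable {E : Type*} [NormedAddCommGroup E] [Lattice E] [HasSolidNorm E] [IsOrderedAddMonoid E]

/-- Pick an increasing sequence in `D` whose `n`-th term is within `1 / (n + 1)` of every larger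
element of `D`. By directedness its supremum bounds `D`, hence equals `b`, and order continuity
makes the sequence converge to it. -/
theorem mem_closure_of_isLUB_of_directedOn (hDed : IsDedekindComplete E)
    (hoc : HasSigmaOrderContinuousNorm E) {D : Set E} (hne : D.Nonempty)
    (hdir : DirectedOn (· ≤ ·) D) {b : E} (hb : IsLUB D b) : b ∈ closure D := by
  have htail : ∀ n : ℕ, ∀ p ∈ D, ∃ q ∈ D, p ≤ q ∧ ∀ y ∈ D, q ≤ y → ‖y - q‖ ≤ 1 / (n + 1) := by
    intro n p hp
    obtain ⟨q, ⟨hqD, hpq⟩, hq⟩ := exists_forall_le_norm_sub_le hDed hoc (D := D ∩ Ici p)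
      ⟨p, hp, le_rfl⟩ (hb.bddAbove.mono inter_subset_left) Nat.one_div_pos_of_nat
    exact ⟨q, hqD, hpq, fun y hy hqy => hq y ⟨hy, hpq.trans hqy⟩ hqy⟩
  choose! g hgD hle hg using htail
  obtain ⟨x₀, hx₀⟩ := hne
  let a : ℕ → E := fun n => Nat.rec (motive := fun _ => E) x₀ (fun n p => g n p) n
  have haD : ∀ n, a n ∈ D := fun n => by
    induction n with
    | zero => exact hx₀
    | succ n ih => exact hgD n _ ih
  have ha : Monotone a := monotone_nat_of_le_succ fun n => hle n _ (haD n)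
  obtain ⟨c, hc⟩ := hDed (range a) (range_nonempty a) (hb.bddAbove.mono (range_subset_iff.2 haD))
  have hlim := hoc.tendsto_of_monotone ha hc
  have hcD : c ∈ upperBounds D := by
    intro y hy
    choose z hzD hyz haz using fun n => hdir y hy (a (n + 1)) (haD (n + 1))
    have hz : Tendsto (fun n => z n - a (n + 1)) atTop (𝓝 0) := by
      rw [tendsto_iff_norm_sub_tendsto_zero]
      refine squeeze_zero (fun _ => norm_nonneg _) (fun n => ?_)
        tendsto_one_div_add_atTop_nhds_zero_nat
      simpa using hg n (a n) (haD n) (z n) (hzD n) (haz n)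
    exact sub_nonpos.1 <| ge_of_tendsto' hz fun n =>
      sub_le_sub (hyz n) (hc.1 (mem_range_self (n + 1)))
  have hcb : c = b :=
    le_antisymm (hc.2 (forall_mem_range.2 fun n => hb.1 (haD n))) (hb.2 hcD)
  exact hcb ▸ mem_closure_of_tendsto hlim (Eventually.of_forall haD)

end OrderContinuity

section ConvexOperator

variable {E β : Type*}

theorem convexOn_univ_iff_forall_one_sub [AddCommMonoid E] [Module ℝ E] [AddCommMonoid β]
    [PartialOrder β] [Module ℝ β] {f : E → β} :
    ConvexOn ℝ univ f ↔ ∀ x y : E, ∀ a : ℝ, 0 ≤ a → a ≤ 1 →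
      f (a • x + (1 - a) • y) ≤ a • f x + (1 - a) • f y := by
  refine ⟨fun hf x y a ha ha₁ => hf.2 trivial trivial ha (sub_nonneg.2 ha₁) (add_sub_cancel a 1),
    fun hf => ⟨convex_univ, fun x _ y _ a b ha hb hab => ?_⟩⟩
  obtain rfl : b = 1 - a := by linarith
  exact hf x y a ha (by linarith)

theorem ConvexOn.comp_of_monotone [AddCommMonoid E] [Module ℝ E] [AddCommMonoid β]
    [PartialOrder β] [Module ℝ β] {g : β → β} {f : E → β} (hg : ConvexOn ℝ univ g)
    (hg' : Monotone g) (hf : ConvexOn ℝ univ f) : ConvexOn ℝ univ (g ∘ f) :=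
  ⟨convex_univ, fun _ _ _ _ _ _ ha hb hab =>
    (hg' (hf.2 trivial trivial ha hb hab)).trans (hg.2 trivial trivial ha hb hab)⟩

theorem ConvexOn.sub_le_smul_sub [AddCommGroup E] [PartialOrder E] [IsOrderedAddMonoid E]
    [Module ℝ E] {S : E → E} (hS : ConvexOn ℝ univ S) {θ : ℝ} (hθ₀ : 0 ≤ θ) (hθ₁ : θ ≤ 1)
    (x u : E) : S (x + θ • u) - S x ≤ θ • (S (x + u) - S x) := by
  have h := hS.2 (mem_univ (x + u)) (mem_univ x) hθ₀ (sub_nonneg.2 hθ₁) (add_sub_cancel θ 1)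
  rw [show θ • (x + u) + (1 - θ) • x = x + θ • u by module] at h
  calc S (x + θ • u) - S x ≤ θ • S (x + u) + (1 - θ) • S x - S x := sub_le_sub_right h _
    _ = θ • (S (x + u) - S x) := by module

variable [NormedAddCommGroup E] [Lattice E] [HasSolidNorm E] [IsOrderedAddMonoid E]
  [NormedSpace ℝ E] {S : E → E}

/-- Convexity bounds `S z - S y` from above along the ray from `y` through `z`, and from below
along the ray from `z` through `y`; both rays are cut off at distance `1`. -/
theorem ConvexOn.norm_sub_le (hS : ConvexOn ℝ univ S) {y z : E} {M : ℝ}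
    (hM : ∀ w, ‖w‖ ≤ ‖y‖ + 2 → ‖S w‖ ≤ M) (hz : ‖z - y‖ ≤ 1) :
    ‖S z - S y‖ ≤ 4 * M * ‖z - y‖ := by
  rcases (norm_nonneg (z - y)).eq_or_lt with hθ | hθ
  · obtain rfl : z = y := by rwa [eq_comm, norm_eq_zero, sub_eq_zero] at hθ
    simp
  set θ := ‖z - y‖
  set u := θ⁻¹ • (z - y)
  have hu : ‖u‖ = 1 := by
    rw [norm_smul, norm_inv, Real.norm_of_nonneg hθ.le, inv_mul_cancel₀ hθ.ne']
  have hz_eq : z = y + θ • u := by rw [smul_inv_smul₀ hθ.ne', add_sub_cancel]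
  have hy_eq : y = z + θ • -u := by rw [hz_eq]; module
  have hzn : ‖z‖ ≤ ‖y‖ + 1 := by
    calc ‖z‖ ≤ ‖y‖ + ‖z - y‖ := norm_le_insert' z y
      _ ≤ ‖y‖ + 1 := by linarith
  have hbound : ∀ w w', ‖w‖ ≤ ‖y‖ + 2 → ‖w'‖ ≤ ‖y‖ + 2 → ‖θ • (S w - S w')‖ ≤ θ * (2 * M) := by
    intro w w' hw hw'
    rw [norm_smul, Real.norm_of_nonneg hθ.le]
    have := (_root_.norm_sub_le (S w) (S w')).trans (add_le_add (hM w hw) (hM w' hw'))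
    exact mul_le_mul_of_nonneg_left (by linarith) hθ.le
  have hup := hS.sub_le_smul_sub hθ.le hz y u
  have hlow := hS.sub_le_smul_sub hθ.le hz z (-u)
  rw [← hz_eq] at hup
  rw [← hy_eq] at hlow
  calc ‖S z - S y‖ ≤ ‖-(θ • (S (z + -u) - S z))‖ + ‖θ • (S (y + u) - S y)‖ :=
        norm_le_norm_add_norm_of_le_of_le (by rw [neg_le]; simpa using hlow) hup
    _ ≤ θ * (2 * M) + θ * (2 * M) := by
        rw [norm_neg]
        refine add_le_add (hbound _ _ ?_ (by linarith)) (hbound _ _ ?_ (by linarith))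
        · calc ‖z + -u‖ ≤ ‖z‖ + ‖-u‖ := norm_add_le _ _
            _ ≤ ‖y‖ + 2 := by rw [norm_neg, hu]; linarith
        · calc ‖y + u‖ ≤ ‖y‖ + ‖u‖ := norm_add_le _ _
            _ ≤ ‖y‖ + 2 := by rw [hu]; linarith
    _ = 4 * M * θ := by ring

theorem ConvexOn.continuous_of_isBoundedOnBalls (hS : ConvexOn ℝ univ S)
    (hb : IsBoundedOnBalls S) : Continuous S := by
  refine continuous_iff_continuousAt.2 fun y => ?_
  obtain ⟨M, hM⟩ := hb (‖y‖ + 2) (by positivity)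
  have hdist : Tendsto (fun z => ‖z - y‖) (𝓝 y) (𝓝 0) :=
    tendsto_iff_norm_sub_tendsto_zero.1 tendsto_id
  rw [ContinuousAt, tendsto_iff_norm_sub_tendsto_zero]
  refine squeeze_zero' (Eventually.of_forall fun _ => norm_nonneg _) ?_
    (by simpa using hdist.const_mul (4 * M))
  filter_upwards [Metric.closedBall_mem_nhds y one_pos] with z hz
  exact hS.norm_sub_le hM (mem_closedBall_iff_norm.1 hz)

end ConvexOperator

section PointwiseSup

variable {ι α β : Type*}

theorem monotone_of_isLUB_range [Preorder α] [Preorder β] {F : ι → α → β} {G : α → β}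
    (hF : ∀ i, Monotone (F i)) (hG : ∀ x, IsLUB (range fun i => F i x) (G x)) : Monotone G :=
  fun x y hxy => (hG x).2 <| forall_mem_range.2 fun i =>
    (hF i hxy).trans ((hG y).1 (mem_range_self i))

theorem convexOn_of_isLUB_range [AddCommMonoid α] [Module ℝ α] [AddCommMonoid β]
    [PartialOrder β] [IsOrderedAddMonoid β] [Module ℝ β] [PosSMulMono ℝ β] {F : ι → α → β}
    {G : α → β} (hF : ∀ i, ConvexOn ℝ univ (F i)) (hG : ∀ x, IsLUB (range fun i => F i x) (G x)) :
    ConvexOn ℝ univ G :=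
  ⟨convex_univ, fun x _ y _ _ _ ha hb hab => (hG _).2 <| forall_mem_range.2 fun i =>
    ((hF i).2 trivial trivial ha hb hab).trans <| add_le_add
      (smul_le_smul_of_nonneg_left ((hG x).1 (mem_range_self i)) ha)
      (smul_le_smul_of_nonneg_left ((hG y).1 (mem_range_self i)) hb)⟩

theorem map_smul_of_isLUB_range [MulAction ℝ α] [PartialOrder β] [MulAction ℝ β]
    [PosSMulMono ℝ β] {F : ι → α → β} {G : α → β} {a : ℝ} (ha : 0 < a)
    (hF : ∀ i x, F i (a • x) = a • F i x) (hG : ∀ x, IsLUB (range fun i => F i x) (G x))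
    (x : α) : G (a • x) = a • G x := by
  refine (hG (a • x)).unique ?_
  simp only [hF]
  rw [show (fun i => a • F i x) = (a • ·) ∘ fun i => F i x from rfl, range_comp]
  exact (OrderIso.smulRight ha).isLUB_image'.2 (hG x)

theorem le_comp_of_isLUB_range [Preorder β] {F : ι → ℝ → β → β} {G : ℝ → β → β}
    (hG : ∀ h, 0 < h → ∀ x, IsLUB (range fun i => F i h x) (G h x))
    (hmono : ∀ i h, 0 ≤ h → Monotone (F i h))
    (hsg : ∀ i s t, 0 ≤ s → 0 ≤ t → ∀ x, F i (t + s) x = F i t (F i s x))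
    {a b : ℝ} (ha : 0 < a) (hb : 0 < b) (x : β) : G (a + b) x ≤ G a (G b x) :=
  (hG _ (add_pos ha hb) x).2 <| forall_mem_range.2 fun i => by
    rw [hsg i b a hb.le ha.le]
    exact (hmono i a ha.le ((hG b hb x).1 (mem_range_self i))).trans
      ((hG a ha _).1 (mem_range_self i))

end PointwiseSup

section NisioIter

variable {E : Type*} {J K : ℝ → E → E} {l : List ℝ}

theorem nisioIter_append (J : ℝ → E → E) (l₁ l₂ : List ℝ) (x : E) :
    nisioIter J (l₁ ++ l₂) x = nisioIter J l₁ (nisioIter J l₂ x) := by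
  induction l₁ with
  | nil => rfl
  | cons h l ih => simp only [List.cons_append, nisioIter, ih]

theorem nisioIter_monotone [Preorder E] (hJ : ∀ h ∈ l, Monotone (J h)) :
    Monotone (nisioIter J l) := by
  induction l with
  | nil => exact monotone_id
  | cons h l ih => exact (hJ h List.mem_cons_self).comp (ih fun g hg => hJ g (.tail h hg))

theorem nisioIter_continuous [TopologicalSpace E] (hJ : ∀ h ∈ l, Continuous (J h)) :
    Continuous (nisioIter J l) := by
  induction l with
  | nil => exact continuous_id
  | cons h l ih => exact (hJ h List.mem_cons_self).comp (ih fun g hg => hJ g (.tail h hg))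

theorem convexOn_nisioIter [AddCommMonoid E] [PartialOrder E] [Module ℝ E]
    (hmono : ∀ h ∈ l, Monotone (J h)) (hconv : ∀ h ∈ l, ConvexOn ℝ univ (J h)) :
    ConvexOn ℝ univ (nisioIter J l) := by
  induction l with
  | nil => exact convexOn_id convex_univ
  | cons h l ih =>
    exact (hconv h List.mem_cons_self).comp_of_monotone (hmono h List.mem_cons_self)
      (ih (fun g hg => hmono g (.tail h hg)) fun g hg => hconv g (.tail h hg))

theorem nisioIter_smul [SMul ℝ E] {a : ℝ} (hJ : ∀ h ∈ l, ∀ x, J h (a • x) = a • J h x)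
    (x : E) : nisioIter J l (a • x) = a • nisioIter J l x := by
  induction l with
  | nil => rfl
  | cons h l ih =>
    simp only [nisioIter, ih fun g hg => hJ g (.tail h hg), hJ h List.mem_cons_self]

theorem nisioIter_le_nisioIter [Preorder E] (hJ : ∀ h ∈ l, Monotone (J h))
    (hJK : ∀ h ∈ l, ∀ x, J h x ≤ K h x) (x : E) : nisioIter J l x ≤ nisioIter K l x := by
  induction l with
  | nil => exact le_rfl
  | cons h l ih =>
    exact (hJ h List.mem_cons_self (ih (fun g hg => hJ g (.tail h hg))
      fun g hg => hJK g (.tail h hg))).trans (hJK h List.mem_cons_self _)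

theorem nisioIter_eq_of_semigroup {T : ℝ → E → E} (hT0 : ∀ x, T 0 x = x)
    (hT : ∀ s t, 0 ≤ s → 0 ≤ t → ∀ x, T (t + s) x = T t (T s x)) (hl : ∀ h ∈ l, 0 ≤ h)
    (x : E) : nisioIter T l x = T l.sum x := by
  induction l with
  | nil => exact (hT0 x).symm
  | cons h l ih =>
    rw [nisioIter, ih fun g hg => hl g (.tail h hg), List.sum_cons,
      hT _ _ (List.sum_nonneg fun g hg => hl g (.tail h hg)) (hl h List.mem_cons_self)]

end NisioIter

section Partitions

def partitions (t : ℝ) : Set (List ℝ) := {l | (∀ h ∈ l, 0 < h) ∧ l.sum = t}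

variable {l l₁ l₂ : List ℝ} {s t : ℝ}

theorem mem_partitions : l ∈ partitions t ↔ (∀ h ∈ l, 0 < h) ∧ l.sum = t := Iff.rfl

theorem sum_pos_of_mem_partitions (hl : l ∈ partitions t) (hne : l ≠ []) : 0 < t :=
  hl.2 ▸ List.sum_pos l hl.1 hne

theorem partitions_zero : partitions 0 = {[]} := by
  refine eq_singleton_iff_unique_mem.2 ⟨⟨by simp, rfl⟩, fun l hl => ?_⟩
  by_contra hne
  exact (sum_pos_of_mem_partitions hl hne).ne rfl

theorem partitions_nonempty (ht : 0 ≤ t) : (partitions t).Nonempty := by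
  rcases ht.eq_or_lt with rfl | ht
  · exact ⟨[], by simp, rfl⟩
  · exact ⟨[t], by simpa using ht, by simp⟩

theorem append_mem_partitions (h₁ : l₁ ∈ partitions t) (h₂ : l₂ ∈ partitions s) :
    l₁ ++ l₂ ∈ partitions (t + s) :=
  ⟨fun h hh => (List.mem_append.1 hh).elim (h₁.1 h) (h₂.1 h), by rw [List.sum_append, h₁.2, h₂.2]⟩

theorem cons_mem_partitions {h : ℝ} (hh : 0 < h) (hl : l ∈ partitions t) :
    h :: l ∈ partitions (h + t) := by
  simpa using append_mem_partitions (l₁ := [h]) ⟨by simpa using hh, by simp⟩ hl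

theorem range_nisioIter_partitions {E : Type*} (J : ℝ → E → E) (t : ℝ) (x : E) :
    (range fun l : partitions t => nisioIter J l x) =
      {v | ∃ l : List ℝ, (∀ h ∈ l, 0 < h) ∧ l.sum = t ∧ v = nisioIter J l x} := by
  ext v
  constructor
  · rintro ⟨⟨l, hl, hsum⟩, rfl⟩
    exact ⟨l, hl, hsum, rfl⟩
  · rintro ⟨l, hl, hsum, rfl⟩
    exact ⟨⟨l, hl, hsum⟩, rfl⟩

end Partitions

section Refinement

variable {E : Type*} [Preorder E] {J : ℝ → E → E} {l l₁ l₂ p : List ℝ} {s t : ℝ}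

theorem le_nisioIter_of_mem_partitions (hmono : ∀ h, 0 < h → Monotone (J h))
    (hmerge : ∀ a b, 0 < a → 0 < b → ∀ x, J (a + b) x ≤ J a (J b x))
    (hp : p ∈ partitions t) (ht : 0 < t) (x : E) : J t x ≤ nisioIter J p x := by
  induction p generalizing t with
  | nil =>
    obtain ⟨-, rfl⟩ := hp
    simp at ht
  | cons h p ih =>
    obtain ⟨hpos, rfl⟩ := hp
    have hh := hpos h List.mem_cons_self
    have hp : p ∈ partitions p.sum := ⟨fun g hg => hpos g (.tail h hg), rfl⟩
    rw [List.sum_cons]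
    rcases eq_or_ne p [] with rfl | hne
    · simp [nisioIter]
    · have hsum := sum_pos_of_mem_partitions hp hne
      exact (hmerge h p.sum hh hsum x).trans (hmono h hh (ih hp hsum))

theorem exists_partitions_le_nisioIter_comp (hmono : ∀ h, 0 < h → Monotone (J h))
    (hmerge : ∀ a b, 0 < a → 0 < b → ∀ x, J (a + b) x ≤ J a (J b x))
    (ht : 0 ≤ t) (hs : 0 ≤ s) (hl : l ∈ partitions (t + s)) :
    ∃ l₁ ∈ partitions t, ∃ l₂ ∈ partitions s,
      ∀ x : E, nisioIter J l x ≤ nisioIter J l₁ (nisioIter J l₂ x) := by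
  induction l generalizing t with
  | nil =>
    have hsum := hl.2
    simp only [List.sum_nil] at hsum
    exact ⟨[], ⟨by simp, by simp; linarith⟩, [], ⟨by simp, by simp; linarith⟩, fun _ => le_rfl⟩
  | cons h r ih =>
    obtain ⟨hpos, hsum⟩ := hl
    have hh := hpos h List.mem_cons_self
    have hr : ∀ g ∈ r, 0 < g := fun g hg => hpos g (.tail h hg)
    rw [List.sum_cons] at hsum
    by_cases hht : h ≤ t
    · obtain ⟨r₁, hr₁, r₂, hr₂, hle⟩ := ih (sub_nonneg.2 hht) ⟨hr, by linarith⟩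
      exact ⟨h :: r₁, by simpa using cons_mem_partitions hh hr₁, r₂, hr₂,
        fun x => hmono h hh (hle x)⟩
    rcases ht.eq_or_lt with rfl | ht
    · exact ⟨[], ⟨by simp, rfl⟩, h :: r, ⟨hpos, by simp; linarith⟩, fun _ => le_rfl⟩
    have hht : 0 < h - t := sub_pos.2 (not_le.1 hht)
    have hs' : h - t + r.sum = s := by linarith
    refine ⟨[t], ⟨by simpa using ht, by simp⟩, (h - t) :: r,
      hs' ▸ cons_mem_partitions hht ⟨hr, rfl⟩, fun x => ?_⟩
    calc nisioIter J (h :: r) x = J (t + (h - t)) (nisioIter J r x) := by rw [add_sub_cancel]; rfl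
      _ ≤ J t (J (h - t) (nisioIter J r x)) := hmerge _ _ ht hht _

/-- A common refinement: split `l₂` at the first increment `a` of `l₁ = a :: r`, refine the
part of `l₂` after `a` together with `r`, and keep the part before `a`, which refines `[a]`. -/
theorem exists_partitions_nisioIter_le_and_le (hmono : ∀ h, 0 < h → Monotone (J h))
    (hmerge : ∀ a b, 0 < a → 0 < b → ∀ x, J (a + b) x ≤ J a (J b x)) (x : E)
    (h₁ : l₁ ∈ partitions t) (h₂ : l₂ ∈ partitions t) :
    ∃ m ∈ partitions t, nisioIter J l₁ x ≤ nisioIter J m x ∧ nisioIter J l₂ x ≤ nisioIter J m x := by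
  induction l₁ generalizing t l₂ with
  | nil =>
    obtain ⟨-, rfl⟩ := h₁
    rw [List.sum_nil, partitions_zero, mem_singleton_iff] at h₂
    subst h₂
    exact ⟨[], ⟨by simp, rfl⟩, le_rfl, le_rfl⟩
  | cons a r ih =>
    obtain ⟨hpos, rfl⟩ := h₁
    have ha := hpos a List.mem_cons_self
    have hr : r ∈ partitions r.sum := ⟨fun g hg => hpos g (.tail a hg), rfl⟩
    rw [List.sum_cons] at h₂ ⊢
    obtain ⟨p, hp, q, hq, hle⟩ := exists_partitions_le_nisioIter_comp hmono hmerge ha.le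
      (List.sum_nonneg fun g hg => (hr.1 g hg).le) h₂
    obtain ⟨m, hm, hrm, hqm⟩ := ih hr hq
    refine ⟨p ++ m, append_mem_partitions hp hm, ?_, ?_⟩
    · rw [nisioIter_append]
      exact (hmono a ha hrm).trans (le_nisioIter_of_mem_partitions hmono hmerge hp ha _)
    · rw [nisioIter_append]
      exact (hle x).trans (nisioIter_monotone (fun h hh => hmono h (hp.1 h hh)) hqm)

theorem directed_nisioIter (hmono : ∀ h, 0 < h → Monotone (J h))
    (hmerge : ∀ a b, 0 < a → 0 < b → ∀ x, J (a + b) x ≤ J a (J b x)) (t : ℝ) (x : E) :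
    Directed (· ≤ ·) fun l : partitions t => nisioIter J l x := fun l₁ l₂ => by
  obtain ⟨m, hm, h₁, h₂⟩ := exists_partitions_nisioIter_le_and_le hmono hmerge x l₁.2 l₂.2
  exact ⟨⟨m, hm⟩, h₁, h₂⟩

end Refinement

section Envelope

def IsNisioEnvelope {E : Type*} [Preorder E] (J S : ℝ → E → E) : Prop :=
  ∀ t, 0 ≤ t → ∀ x, IsLUB (range fun l : partitions t => nisioIter J l x) (S t x)

namespace IsNisioEnvelope

variable {E : Type*} {J S T : ℝ → E → E} {s t : ℝ}

section Preorder

variable [Preorder E]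

theorem nisioIter_le (hS : IsNisioEnvelope J S) (ht : 0 ≤ t) {l : List ℝ}
    (hl : l ∈ partitions t) (x : E) : nisioIter J l x ≤ S t x :=
  (hS t ht x).1 ⟨⟨l, hl⟩, rfl⟩

theorem le_of_forall_nisioIter_le (hS : IsNisioEnvelope J S) (ht : 0 ≤ t) {x y : E}
    (h : ∀ l ∈ partitions t, nisioIter J l x ≤ y) : S t x ≤ y :=
  (hS t ht x).2 (forall_mem_range.2 fun l => h l l.2)

theorem monotone (hS : IsNisioEnvelope J S) (hmono : ∀ h, 0 < h → Monotone (J h))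
    (ht : 0 ≤ t) : Monotone (S t) :=
  monotone_of_isLUB_range (fun l => nisioIter_monotone fun h hh => hmono h (l.2.1 h hh))
    (hS t ht)

theorem semigroup_le (hS : IsNisioEnvelope J S) (hT0 : ∀ x, T 0 x = x)
    (hT : ∀ s t, 0 ≤ s → 0 ≤ t → ∀ x, T (t + s) x = T t (T s x))
    (hTmono : ∀ h, 0 < h → Monotone (T h)) (hTJ : ∀ h, 0 < h → ∀ x, T h x ≤ J h x)
    (ht : 0 ≤ t) (x : E) : T t x ≤ S t x := by
  obtain ⟨l, hl⟩ := partitions_nonempty ht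
  calc T t x = nisioIter T l x := by
        rw [nisioIter_eq_of_semigroup hT0 hT (fun h hh => (hl.1 h hh).le), hl.2]
    _ ≤ nisioIter J l x := nisioIter_le_nisioIter (fun h hh => hTmono h (hl.1 h hh))
        (fun h hh => hTJ h (hl.1 h hh)) x
    _ ≤ S t x := hS.nisioIter_le ht hl x

theorem le_semigroup (hS : IsNisioEnvelope J S) (hT0 : ∀ x, T 0 x = x)
    (hT : ∀ s t, 0 ≤ s → 0 ≤ t → ∀ x, T (t + s) x = T t (T s x))
    (hmono : ∀ h, 0 < h → Monotone (J h)) (hJT : ∀ h, 0 < h → ∀ x, J h x ≤ T h x)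
    (ht : 0 ≤ t) (x : E) : S t x ≤ T t x :=
  hS.le_of_forall_nisioIter_le ht fun l hl => by
    calc nisioIter J l x ≤ nisioIter T l x := nisioIter_le_nisioIter
          (fun h hh => hmono h (hl.1 h hh)) (fun h hh => hJT h (hl.1 h hh)) x
      _ = T t x := by rw [nisioIter_eq_of_semigroup hT0 hT (fun h hh => (hl.1 h hh).le), hl.2]

theorem add_le (hS : IsNisioEnvelope J S) (hmono : ∀ h, 0 < h → Monotone (J h))
    (hmerge : ∀ a b, 0 < a → 0 < b → ∀ x, J (a + b) x ≤ J a (J b x))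
    (hs : 0 ≤ s) (ht : 0 ≤ t) (x : E) : S (t + s) x ≤ S t (S s x) :=
  hS.le_of_forall_nisioIter_le (add_nonneg ht hs) fun l hl => by
    obtain ⟨l₁, hl₁, l₂, hl₂, hle⟩ := exists_partitions_le_nisioIter_comp hmono hmerge ht hs hl
    calc nisioIter J l x ≤ nisioIter J l₁ (nisioIter J l₂ x) := hle x
      _ ≤ nisioIter J l₁ (S s x) := nisioIter_monotone (fun h hh => hmono h (hl₁.1 h hh))
          (hS.nisioIter_le hs hl₂ x)
      _ ≤ S t (S s x) := hS.nisioIter_le ht hl₁ _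

end Preorder

theorem zero [PartialOrder E] (hS : IsNisioEnvelope J S) (x : E) : S 0 x = x := by
  refine le_antisymm (hS.le_of_forall_nisioIter_le le_rfl fun l hl => ?_)
    (hS.nisioIter_le le_rfl (l := []) ⟨by simp, rfl⟩ x)
  rw [partitions_zero, mem_singleton_iff] at hl
  rw [hl]
  rfl

theorem convexOn [AddCommMonoid E] [PartialOrder E] [IsOrderedAddMonoid E] [Module ℝ E]
    [PosSMulMono ℝ E] (hS : IsNisioEnvelope J S) (hmono : ∀ h, 0 < h → Monotone (J h))
    (hconv : ∀ h, 0 < h → ConvexOn ℝ univ (J h)) (ht : 0 ≤ t) : ConvexOn ℝ univ (S t) :=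
  convexOn_of_isLUB_range (fun l => convexOn_nisioIter (fun h hh => hmono h (l.2.1 h hh))
    fun h hh => hconv h (l.2.1 h hh)) (hS t ht)

theorem map_smul [MulAction ℝ E] [PartialOrder E] [PosSMulMono ℝ E] (hS : IsNisioEnvelope J S)
    {a : ℝ} (ha : 0 < a) (hJ : ∀ h, 0 < h → ∀ x, J h (a • x) = a • J h x) (ht : 0 ≤ t)
    (x : E) : S t (a • x) = a • S t x :=
  map_smul_of_isLUB_range ha (fun l => nisioIter_smul fun h hh => hJ h (l.2.1 h hh)) (hS t ht) x

variable [NormedAddCommGroup E] [Lattice E] [HasSolidNorm E] [IsOrderedAddMonoid E]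

/-- `S s x` is a norm limit of the directed family `J_π x`, `π ∈ P_s`, and the continuous
`J_σ`, `σ ∈ P_t`, maps that family below the closed set `Iic (S (t + s) x)`. -/
theorem le_add (hS : IsNisioEnvelope J S) (hDed : IsDedekindComplete E)
    (hoc : HasSigmaOrderContinuousNorm E) (hmono : ∀ h, 0 < h → Monotone (J h))
    (hmerge : ∀ a b, 0 < a → 0 < b → ∀ x, J (a + b) x ≤ J a (J b x))
    (hcont : ∀ h, 0 < h → Continuous (J h)) (hs : 0 ≤ s) (ht : 0 ≤ t) (x : E) :
    S t (S s x) ≤ S (t + s) x :=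
  hS.le_of_forall_nisioIter_le ht fun l₁ hl₁ => by
    have := (partitions_nonempty hs).to_subtype
    have hmem : S s x ∈ closure (range fun l₂ : partitions s => nisioIter J l₂ x) :=
      mem_closure_of_isLUB_of_directedOn hDed hoc (range_nonempty _)
        (directedOn_range.2 (directed_nisioIter hmono hmerge s x)) (hS s hs x)
    have hmaps : MapsTo (nisioIter J l₁) (range fun l₂ : partitions s => nisioIter J l₂ x)
        (Iic (S (t + s) x)) := by
      rintro _ ⟨l₂, rfl⟩
      rw [mem_Iic, ← nisioIter_append]
      exact hS.nisioIter_le (add_nonneg ht hs) (append_mem_partitions hl₁ l₂.2) x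
    simpa using map_mem_closure (nisioIter_continuous fun h hh => hcont h (hl₁.1 h hh)) hmem hmaps

theorem add (hS : IsNisioEnvelope J S) (hDed : IsDedekindComplete E)
    (hoc : HasSigmaOrderContinuousNorm E) (hmono : ∀ h, 0 < h → Monotone (J h))
    (hmerge : ∀ a b, 0 < a → 0 < b → ∀ x, J (a + b) x ≤ J a (J b x))
    (hcont : ∀ h, 0 < h → Continuous (J h)) (hs : 0 ≤ s) (ht : 0 ≤ t) (x : E) :
    S (t + s) x = S t (S s x) :=
  le_antisymm (hS.add_le hmono hmerge hs ht x) (hS.le_add hDed hoc hmono hmerge hcont hs ht x)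

end IsNisioEnvelope

end Envelope

theorem nisio_semigroup_envelope_general
    [PosSMulStrictMono ℝ X]
    (hDedC : ∀ s : Set X, s.Nonempty → BddAbove s → ∃ b : X, IsLUB s b)
    (hoc : ∀ f : ℕ → X, Antitone f → IsGLB (Set.range f) 0 →
      Tendsto (fun n => ‖f n‖) atTop (𝓝 (0 : ℝ)))
    {Λ : Type*} [Nonempty Λ]
    (Sf : Λ → ℝ → X → X)
    (hconv : ∀ l : Λ, ∀ t : ℝ, 0 ≤ t → ∀ x y : X, ∀ a : ℝ, 0 ≤ a → a ≤ 1 →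
      Sf l t (a • x + (1 - a) • y) ≤ a • Sf l t x + (1 - a) • Sf l t y)
    (hmono : ∀ l : Λ, ∀ t : ℝ, 0 ≤ t → ∀ x y : X, x ≤ y → Sf l t x ≤ Sf l t y)
    (hbdd : ∀ l : Λ, ∀ t : ℝ, 0 ≤ t → ∀ r : ℝ, 0 < r →
      ∃ M : ℝ, ∀ x : X, ‖x‖ ≤ r → ‖Sf l t x‖ ≤ M)
    (hid : ∀ l : Λ, ∀ x : X, Sf l 0 x = x)
    (hsg : ∀ l : Λ, ∀ s t : ℝ, 0 ≤ s → 0 ≤ t → ∀ x : X, Sf l (t + s) x = Sf l t (Sf l s x))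
    (J : ℝ → X → X)
    (hJ : ∀ h : ℝ, 0 < h → ∀ x : X, IsLUB (Set.range fun l : Λ => Sf l h x) (J h x))
    (C : ℝ → X → X)
    (hCbdd : ∀ t : ℝ, 0 ≤ t → ∀ r : ℝ, 0 < r → ∃ M : ℝ, ∀ x : X, ‖x‖ ≤ r → ‖C t x‖ ≤ M)
    (hCbound : ∀ t : ℝ, 0 ≤ t → ∀ l : List ℝ, (∀ h ∈ l, 0 < h) → l.sum = t →
      ∀ x : X, nisioIter J l x ≤ C t x)
    (Senv : ℝ → X → X)
    (hSenv : ∀ t : ℝ, 0 ≤ t → ∀ x : X,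
      IsLUB {v : X | ∃ l : List ℝ, (∀ h ∈ l, 0 < h) ∧ l.sum = t ∧ v = nisioIter J l x}
        (Senv t x)) :
    -- (a) `Senv` is a convex monotone semigroup of bounded operators
    ((∀ t : ℝ, 0 ≤ t →
        (∀ x y : X, ∀ a : ℝ, 0 ≤ a → a ≤ 1 →
          Senv t (a • x + (1 - a) • y) ≤ a • Senv t x + (1 - a) • Senv t y) ∧
        (∀ x y : X, x ≤ y → Senv t x ≤ Senv t y) ∧
        (∀ r : ℝ, 0 < r → ∃ M : ℝ, ∀ x : X, ‖x‖ ≤ r → ‖Senv t x‖ ≤ M)) ∧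
      (∀ x : X, Senv 0 x = x) ∧
      (∀ s t : ℝ, 0 ≤ s → 0 ≤ t → ∀ x : X, Senv (t + s) x = Senv t (Senv s x))) ∧
    -- (b) `Senv` is an upper bound of the family
    (∀ l : Λ, ∀ t : ℝ, 0 ≤ t → ∀ x : X, Sf l t x ≤ Senv t x) ∧
    -- (c) `Senv` is the least semigroup upper bound
    (∀ T : ℝ → X → X,
      (∀ t : ℝ, 0 ≤ t → ∀ r : ℝ, 0 < r → ∃ M : ℝ, ∀ x : X, ‖x‖ ≤ r → ‖T t x‖ ≤ M) →
      (∀ x : X, T 0 x = x) →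
      (∀ s t : ℝ, 0 ≤ s → 0 ≤ t → ∀ x : X, T (t + s) x = T t (T s x)) →
      (∀ l : Λ, ∀ t : ℝ, 0 ≤ t → ∀ x : X, Sf l t x ≤ T t x) →
      ∀ t : ℝ, 0 ≤ t → ∀ x : X, Senv t x ≤ T t x) ∧
    -- (d) strong continuity
    ((∀ x : X, Tendsto (fun t : ℝ => C t x) (𝓝[>] (0 : ℝ)) (𝓝 x)) →
      (∃ l₀ : Λ, ∀ x : X, Tendsto (fun t : ℝ => Sf l₀ t x) (𝓝[>] (0 : ℝ)) (𝓝 x)) →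
      ∀ x : X, Tendsto (fun t : ℝ => Senv t x) (𝓝[>] (0 : ℝ)) (𝓝 x)) ∧
    -- (e) sublinearity
    ((∀ l : Λ, ∀ t : ℝ, 0 ≤ t → ∀ a : ℝ, 0 < a → ∀ x : X, Sf l t (a • x) = a • Sf l t x) →
      ∀ t : ℝ, 0 ≤ t → ∀ a : ℝ, 0 < a → ∀ x : X, Senv t (a • x) = a • Senv t x) := by
  obtain ⟨l₀⟩ := ‹Nonempty Λ›
  have hSmono : ∀ l t, 0 ≤ t → Monotone (Sf l t) := fun l t ht _ _ => hmono l t ht _ _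
  have hJmono : ∀ h, 0 < h → Monotone (J h) := fun h hh =>
    monotone_of_isLUB_range (fun l => hSmono l h hh.le) (hJ h hh)
  have hJconv : ∀ h, 0 < h → ConvexOn ℝ univ (J h) := fun h hh =>
    convexOn_of_isLUB_range (fun l => convexOn_univ_iff_forall_one_sub.2 (hconv l h hh.le))
      (hJ h hh)
  have hJmerge : ∀ a b, 0 < a → 0 < b → ∀ x, J (a + b) x ≤ J a (J b x) := fun _ _ ha hb =>
    le_comp_of_isLUB_range hJ hSmono hsg ha hb
  have hJcont : ∀ h, 0 < h → Continuous (J h) := fun h hh =>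
    (hJconv h hh).continuous_of_isBoundedOnBalls <| IsBoundedOnBalls.of_le_of_le
      (hbdd l₀ h hh.le) (hCbdd h hh.le) (fun x => (hJ h hh x).1 (mem_range_self l₀))
      (fun x => hCbound h hh.le [h] (by simpa using hh) (by simp) x)
  have hS : IsNisioEnvelope J Senv := fun t ht x => by
    simpa only [range_nisioIter_partitions] using hSenv t ht x
  have hSC : ∀ t, 0 ≤ t → ∀ x, Senv t x ≤ C t x := fun t ht x =>
    hS.le_of_forall_nisioIter_le ht fun l hl => hCbound t ht l hl.1 hl.2 x
  have hSf : ∀ l t, 0 ≤ t → ∀ x, Sf l t x ≤ Senv t x := fun l t ht x =>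
    hS.semigroup_le (hid l) (hsg l) (fun h hh => hSmono l h hh.le)
      (fun h hh x => (hJ h hh x).1 (mem_range_self l)) ht x
  refine ⟨⟨fun t ht => ⟨convexOn_univ_iff_forall_one_sub.1 (hS.convexOn hJmono hJconv ht),
      fun x y hxy => hS.monotone hJmono ht hxy,
      IsBoundedOnBalls.of_le_of_le (hbdd l₀ t ht) (hCbdd t ht) (hSf l₀ t ht) (hSC t ht)⟩,
    hS.zero, fun s t hs ht x => hS.add hDedC hoc hJmono hJmerge hJcont hs ht x⟩, hSf, ?_, ?_, ?_⟩
  · intro T _ hT0 hTsg hT t ht x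
    exact hS.le_semigroup hT0 hTsg hJmono
      (fun h hh x => (hJ h hh x).2 (forall_mem_range.2 fun l => hT l h hh.le x)) ht x
  · rintro hC ⟨l, hl⟩ x
    exact HasSolidNorm.tendsto_of_tendsto_of_tendsto_of_le_of_le (hl x) (hC x)
      (eventually_nhdsWithin_of_forall fun t ht => hSf l t (le_of_lt ht) x)
      (eventually_nhdsWithin_of_forall fun t ht => hSC t (le_of_lt ht) x)
  · intro hhom t ht a ha x
    exact hS.map_smul ha
      (fun h hh => map_smul_of_isLUB_range ha (fun l => hhom l h hh.le a ha) (hJ h hh)) ht x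

/-- Nisio construction of the semigroup envelope. Let `X` be a Dedekind
complete Banach lattice with order continuous norm, `(S_λ)_{λ∈Λ}` a nonempty family of
convex monotone semigroups on `X`, `J h x = sup_λ S_λ(h)x` (assumed to exist), and suppose
`J_π x ≤ C(t)x` for all partitions `π ∈ P_t`, with `C(t)` a bounded operator. Let
`Senv t x = sup_{π ∈ P_t} J_π x`. Then (a) `Senv` is a convex monotone semigroup of
bounded operators, (b) it dominates each `S_λ`, (c) it is below any other semigroup upper
bound, (d) if `C(t)x → x` as `t ↓ 0` and some `S_{λ₀}` is strongly continuous then `Senv`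
is a C₀-semigroup, and (e) if each `S_λ` is sublinear (positively homogeneous) then so
is `Senv`. -/
theorem nisio_semigroup_envelope
    [PosSMulStrictMono ℝ X] [PosSMulReflectLT ℝ X]
    (hDedC : ∀ s : Set X, s.Nonempty → BddAbove s → ∃ b : X, IsLUB s b)
    (hoc : ∀ f : ℕ → X, Antitone f → IsGLB (Set.range f) 0 →
      Tendsto (fun n => ‖f n‖) atTop (𝓝 (0 : ℝ)))
    {Λ : Type*} [Nonempty Λ]
    (Sf : Λ → ℝ → X → X)
    (hconv : ∀ l : Λ, ∀ t : ℝ, 0 ≤ t → ∀ x y : X, ∀ a : ℝ, 0 ≤ a → a ≤ 1 →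
      Sf l t (a • x + (1 - a) • y) ≤ a • Sf l t x + (1 - a) • Sf l t y)
    (hmono : ∀ l : Λ, ∀ t : ℝ, 0 ≤ t → ∀ x y : X, x ≤ y → Sf l t x ≤ Sf l t y)
    (hbdd : ∀ l : Λ, ∀ t : ℝ, 0 ≤ t → ∀ r : ℝ, 0 < r →
      ∃ M : ℝ, ∀ x : X, ‖x‖ ≤ r → ‖Sf l t x‖ ≤ M)
    (hid : ∀ l : Λ, ∀ x : X, Sf l 0 x = x)
    (hsg : ∀ l : Λ, ∀ s t : ℝ, 0 ≤ s → 0 ≤ t → ∀ x : X, Sf l (t + s) x = Sf l t (Sf l s x))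
    (J : ℝ → X → X)
    (hJ : ∀ h : ℝ, 0 < h → ∀ x : X, IsLUB (Set.range fun l : Λ => Sf l h x) (J h x))
    (C : ℝ → X → X)
    (hCbdd : ∀ t : ℝ, 0 ≤ t → ∀ r : ℝ, 0 < r → ∃ M : ℝ, ∀ x : X, ‖x‖ ≤ r → ‖C t x‖ ≤ M)
    (hCbound : ∀ t : ℝ, 0 ≤ t → ∀ l : List ℝ, (∀ h ∈ l, 0 < h) → l.sum = t →
      ∀ x : X, nisioIter J l x ≤ C t x)
    (Senv : ℝ → X → X)
    (hSenv : ∀ t : ℝ, 0 ≤ t → ∀ x : X,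
      IsLUB {v : X | ∃ l : List ℝ, (∀ h ∈ l, 0 < h) ∧ l.sum = t ∧ v = nisioIter J l x}
        (Senv t x)) :
    -- (a) `Senv` is a convex monotone semigroup of bounded operators
    ((∀ t : ℝ, 0 ≤ t →
        (∀ x y : X, ∀ a : ℝ, 0 ≤ a → a ≤ 1 →
          Senv t (a • x + (1 - a) • y) ≤ a • Senv t x + (1 - a) • Senv t y) ∧
        (∀ x y : X, x ≤ y → Senv t x ≤ Senv t y) ∧
        (∀ r : ℝ, 0 < r → ∃ M : ℝ, ∀ x : X, ‖x‖ ≤ r → ‖Senv t x‖ ≤ M)) ∧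
      (∀ x : X, Senv 0 x = x) ∧
      (∀ s t : ℝ, 0 ≤ s → 0 ≤ t → ∀ x : X, Senv (t + s) x = Senv t (Senv s x))) ∧
    -- (b) `Senv` is an upper bound of the family
    (∀ l : Λ, ∀ t : ℝ, 0 ≤ t → ∀ x : X, Sf l t x ≤ Senv t x) ∧
    -- (c) `Senv` is the least semigroup upper bound
    (∀ T : ℝ → X → X,
      (∀ t : ℝ, 0 ≤ t → ∀ r : ℝ, 0 < r → ∃ M : ℝ, ∀ x : X, ‖x‖ ≤ r → ‖T t x‖ ≤ M) →
      (∀ x : X, T 0 x = x) →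
      (∀ s t : ℝ, 0 ≤ s → 0 ≤ t → ∀ x : X, T (t + s) x = T t (T s x)) →
      (∀ l : Λ, ∀ t : ℝ, 0 ≤ t → ∀ x : X, Sf l t x ≤ T t x) →
      ∀ t : ℝ, 0 ≤ t → ∀ x : X, Senv t x ≤ T t x) ∧
    -- (d) strong continuity
    ((∀ x : X, Tendsto (fun t : ℝ => C t x) (𝓝[>] (0 : ℝ)) (𝓝 x)) →
      (∃ l₀ : Λ, ∀ x : X, Tendsto (fun t : ℝ => Sf l₀ t x) (𝓝[>] (0 : ℝ)) (𝓝 x)) →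
      ∀ x : X, Tendsto (fun t : ℝ => Senv t x) (𝓝[>] (0 : ℝ)) (𝓝 x)) ∧
    -- (e) sublinearity
    ((∀ l : Λ, ∀ t : ℝ, 0 ≤ t → ∀ a : ℝ, 0 < a → ∀ x : X, Sf l t (a • x) = a • Sf l t x) →
      ∀ t : ℝ, 0 ≤ t → ∀ a : ℝ, 0 < a → ∀ x : X, Senv t (a • x) = a • Senv t x) :=
  nisio_semigroup_envelope_general hDedC hoc Sf hconv hmono hbdd hid hsg J hJ C hCbdd hCbound Senv
    hSenv
end

section
/- Fix p ∈ [1,∞) and define f : ℝ → ℝ by f(x) = |x|^{−1/(2p)} for 0 < |x| ≤ 1 and f(x) = 0 otherwise. Then f ∈ L^p(ℝ), but for every t > 0 the set {f(· + tλ) : λ ∈ [−1,1]} has no upper bound in the Banach lattice L^p(ℝ): there exists no g ∈ L^p(ℝ) such that for every λ ∈ [−1,1] one has f(x + tλ) ≤ g(x) for almost every x ∈ ℝ. In particular, this family of translates has no least upper bound in L^p(ℝ). -/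
/-!
`|f|^p` is dominated by `|x|^{-1/2}`, which is integrable near `0`, so `f ∈ L^p`.

The translate `f(· + a)` has its pole at `-a`. If `g` dominated a.e. every translate with
`a` in an open set `U`, it would dominate simultaneously, at almost every `x`, the translates
with `a` in a countable dense subset `D ⊆ U`. Taking such an `x ∈ -U` with `-x ∉ D`, the
points `x + a` with `a ∈ D` accumulate at `0` without reaching it, so the values `f (x + a)`
are unbounded while all of them are at most the real number `g x`.
-/

open MeasureTheory Filter Set
open scoped ENNReal

/-- The function `f(x) = |x|^{-1/(2p)}` for `0 < |x| ≤ 1` and `f(x) = 0` otherwise. -/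
noncomputable def polePeak (p : ℝ≥0∞) : ℝ → ℝ :=
  fun x => if 0 < |x| ∧ |x| ≤ 1 then |x| ^ (-(1 / (2 * p.toReal))) else 0

open scoped Topology Pointwise

theorem not_forall_ae_comp_add_le_of_tendsto_atTop {G : Type*} [TopologicalSpace G] [AddGroup G]
    [IsTopologicalAddGroup G] [TopologicalSpace.SeparableSpace G] [MeasurableSpace G]
    (μ : Measure G) [μ.IsOpenPosMeasure] [NullSingletonClass μ] {f : G → ℝ}
    (hf : Tendsto f (𝓝[≠] 0) atTop) {s : Set G} (hs : (interior s).Nonempty) (g : G → ℝ) :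
    ¬ ∀ a ∈ s, ∀ᵐ x ∂μ, f (x + a) ≤ g x := by
  intro hle
  obtain ⟨D, hD_countable, hD_dense⟩ := TopologicalSpace.exists_countable_dense G
  set A := interior s ∩ D
  have hA : A.Countable := hD_countable.mono inter_subset_right
  have h_negA : μ (-A) = 0 := (hA.preimage neg_injective : (-A).Countable).measure_zero μ
  have h_ae : ∀ᵐ x ∂μ, (∀ a ∈ A, f (x + a) ≤ g x) ∧ x ∉ -A :=
    ((ae_ball_iff hA).2 fun a ha ↦ hle a (interior_subset ha.1)).and
      (measure_eq_zero_iff_ae_notMem.1 h_negA)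
  have hpos : μ (-interior s) ≠ 0 := (isOpen_interior.neg.measure_pos μ hs.neg).ne'
  obtain ⟨x, hx, hx_le, hxA⟩ := Measure.exists_mem_of_measure_ne_zero_of_ae hpos
    (ae_restrict_of_ae h_ae)
  have : (𝓝[A] (-x)).NeBot :=
    mem_closure_iff_nhdsWithin_neBot.1 (hD_dense.open_subset_closure_inter isOpen_interior hx)
  -- `x + a ≠ 0` for `a ∈ A` because `-x ∉ A`.
  have h_tendsto : Tendsto (x + ·) (𝓝[A] (-x)) (𝓝[≠] 0) := by
    refine tendsto_nhdsWithin_iff.2 ⟨?_, eventually_nhdsWithin_of_forall fun a ha h0 ↦ ?_⟩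
    · simpa using (continuous_const_add x).continuousWithinAt (s := A) (x := -x) |>.tendsto
    · exact hxA (by simpa [eq_neg_of_add_eq_zero_right h0] using ha)
  obtain ⟨a, hfa, ha⟩ :=
    (((hf.comp h_tendsto).eventually_gt_atTop (g x)).and self_mem_nhdsWithin).exists
  exact (hx_le a ha).not_gt hfa

theorem measurable_polePeak (p : ℝ≥0∞) : Measurable (polePeak p) :=
  Measurable.ite ((measurableSet_lt measurable_const measurable_abs).inter
    (measurableSet_le measurable_abs measurable_const)) (by fun_prop) measurable_const

theorem support_polePeak_subset (p : ℝ≥0∞) :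
    Function.support (polePeak p) ⊆ Metric.closedBall 0 1 :=
  Function.support_subset_iff'.2 fun x hx ↦ if_neg fun h ↦ hx <| by
    simpa [Metric.mem_closedBall] using h.2

variable {p : ℝ≥0∞}

theorem norm_polePeak_rpow_le (hp0 : p ≠ 0) (hptop : p ≠ ⊤) (x : ℝ) :
    ‖polePeak p x‖ ^ p.toReal ≤ ‖x‖ ^ (-(1 / 2 : ℝ)) := by
  have hq : 0 < p.toReal := ENNReal.toReal_pos hp0 hptop
  rw [Real.norm_eq_abs, Real.norm_eq_abs, polePeak]
  split_ifs with hx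
  · rw [abs_of_nonneg (by positivity), ← Real.rpow_mul (abs_nonneg x)]
    field_simp
    rfl
  · rw [abs_zero, Real.zero_rpow hq.ne']
    positivity

theorem memLp_polePeak (hp0 : p ≠ 0) (hptop : p ≠ ⊤) : MemLp (polePeak p) p volume := by
  have hmeas := measurable_polePeak p
  rw [← integrable_norm_rpow_iff hmeas.aestronglyMeasurable hp0 hptop,
    ← integrableOn_iff_integrable_of_support_subset (s := Metric.ball 0 2)]
  · refine integrableOn_ball_of_norm_le_rpow (by simp) (C := 1) (α := 1 / 2) (by norm_num)
      (ae_of_all _ fun x ↦ ?_) (hmeas.norm.pow_const _).aestronglyMeasurable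
    rw [Real.norm_of_nonneg (by positivity), one_mul]
    exact norm_polePeak_rpow_le hp0 hptop x
  · refine (Function.support_comp_subset (g := fun y : ℝ ↦ ‖y‖ ^ p.toReal) ?_ _).trans <|
      (support_polePeak_subset p).trans (Metric.closedBall_subset_ball one_lt_two)
    simp [Real.zero_rpow (ENNReal.toReal_pos hp0 hptop).ne']

theorem tendsto_polePeak_nhdsNE_zero (hp0 : p ≠ 0) (hptop : p ≠ ⊤) :
    Tendsto (polePeak p) (𝓝[≠] 0) atTop := by
  have he : -(1 / (2 * p.toReal)) < 0 := by
    have := ENNReal.toReal_pos hp0 hptop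
    simp only [Left.neg_neg_iff]; positivity
  refine ((tendsto_rpow_neg_nhdsGT_zero he).comp tendsto_abs_nhdsNE_zero).congr' ?_
  filter_upwards [mem_nhdsWithin_of_mem_nhds (Icc_mem_nhds (by norm_num : (-1 : ℝ) < 0) one_pos),
    self_mem_nhdsWithin] with x hx h0
  simp [polePeak, abs_le.2 hx, abs_pos.2 h0]

/-- For `p ∈ [1,∞)`, the function `f(x) = |x|^{-1/(2p)} 1_{0<|x|≤1}` belongs
to `L^p(ℝ)`, but for every `t > 0` the family of translates `{f(· + tλ) : λ ∈ [−1,1]}`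
has no upper bound in `L^p(ℝ)`: there is no `g ∈ L^p(ℝ)` with `f(x + tλ) ≤ g(x)` for
a.e. `x`, for every `λ ∈ [−1,1]`. In particular it has no least upper bound. -/
theorem translates_of_pole_have_no_upper_bound_in_Lp
    (p : ℝ≥0∞) (hp1 : 1 ≤ p) (hptop : p ≠ ⊤) :
    MemLp (polePeak p) p (volume : Measure ℝ) ∧
    ∀ t : ℝ, 0 < t →
      ¬ ∃ g : ℝ → ℝ, MemLp g p (volume : Measure ℝ) ∧
        ∀ lam : ℝ, lam ∈ Icc (-1 : ℝ) 1 →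
          ∀ᵐ x : ℝ, polePeak p (x + t * lam) ≤ g x := by
  have hp0 : p ≠ 0 := (zero_lt_one.trans_le hp1).ne'
  refine ⟨memLp_polePeak hp0 hptop, fun t ht ⟨g, _, hle⟩ ↦ ?_⟩
  refine not_forall_ae_comp_add_le_of_tendsto_atTop volume (tendsto_polePeak_nhdsNE_zero hp0 hptop)
    (s := Ioo (-t) t) (by simp [ht]) g fun a ⟨ha₁, ha₂⟩ ↦ ?_
  have hlam : a / t ∈ Icc (-1 : ℝ) 1 := by
    rw [mem_Icc, le_div_iff₀ ht, div_le_iff₀ ht]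
    constructor <;> linarith
  simpa [mul_div_cancel₀ a ht.ne'] using hle (a / t) hlam
end

section
/- Let X and Y be Banach lattices and let S : X → Y be convex and monotone. Then S is continuous. -/
/-!
Let `xₙ → x₀`. Passing to a subsequence with `∑ (n + 1) ‖xₙ - x₀‖ < ∞`, completeness gives
`z = ∑ (n + 1) |xₙ - x₀|` with `|xₙ - x₀| ≤ z / (n + 1)`. Convexity and monotonicity give
`|S (x₀ + h) - S x₀| ≤ a • (S (x₀ + z) - S x₀)` whenever `|h| ≤ a • z` and `0 ≤ a ≤ 1`, so by
solidity of the norm `S xₙ → S x₀` along the subsequence; hence along the whole sequence.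
-/

open Filter Topology Set

section OrderedModule

variable {X Y : Type*} [AddCommGroup X] [Module ℝ X] [AddCommGroup Y] [PartialOrder Y]
  [Module ℝ Y] {f : X → Y}

theorem ConvexOn.apply_add_smul_le (hf : ConvexOn ℝ univ f) (x z : X) {a : ℝ} (ha₀ : 0 ≤ a)
    (ha₁ : a ≤ 1) : f (x + a • z) ≤ f x + a • (f (x + z) - f x) :=
  calc f (x + a • z) = f (a • (x + z) + (1 - a) • x) := by congr 1; module
    _ ≤ a • f (x + z) + (1 - a) • f x :=
      hf.2 trivial trivial ha₀ (by linarith) (by ring)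
    _ = f x + a • (f (x + z) - f x) := by module

theorem ConvexOn.two_smul_apply_le [IsOrderedAddMonoid Y] [PosSMulMono ℝ Y]
    (hf : ConvexOn ℝ univ f) (x h : X) : (2 : ℝ) • f x ≤ f (x + h) + f (x - h) :=
  calc (2 : ℝ) • f x = (2 : ℝ) • f ((1 / 2 : ℝ) • (x + h) + (1 / 2 : ℝ) • (x - h)) := by
        congr 2; module
    _ ≤ (2 : ℝ) • ((1 / 2 : ℝ) • f (x + h) + (1 / 2 : ℝ) • f (x - h)) :=
      smul_le_smul_of_nonneg_left (hf.2 trivial trivial (by norm_num) (by norm_num) (by norm_num))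
        zero_le_two
    _ = f (x + h) + f (x - h) := by module

end OrderedModule

section LatticeOrderedModule

variable {X Y : Type*} [AddCommGroup X] [Lattice X] [IsOrderedAddMonoid X] [Module ℝ X]
  [AddCommGroup Y] [Lattice Y] [IsOrderedAddMonoid Y] [Module ℝ Y] [PosSMulMono ℝ Y]
  {f : X → Y}

/-- `h ≤ a • z` controls `f (x + h)` from above by convexity along `z`, and
midpoint convexity turns the same bound for `-h` into a bound from below. -/
theorem ConvexOn.abs_apply_add_sub_le (hf : ConvexOn ℝ univ f) (hmono : Monotone f)
    {x h z : X} {a : ℝ} (ha₀ : 0 ≤ a) (ha₁ : a ≤ 1) (hh : |h| ≤ a • z) :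
    |f (x + h) - f x| ≤ a • (f (x + z) - f x) := by
  have hstep : ∀ k : X, k ≤ a • z → f (x + k) - f x ≤ a • (f (x + z) - f x) := fun k hk =>
    sub_le_iff_le_add'.2 <|
      (hmono (add_le_add_right hk x)).trans (hf.apply_add_smul_le x z ha₀ ha₁)
  refine abs_le'.2 ⟨hstep h ((le_abs_self h).trans hh), ?_⟩
  calc -(f (x + h) - f x) ≤ f (x - h) - f x := by
        rw [neg_sub, sub_le_sub_iff, add_comm (f (x - h)), ← two_smul ℝ]
        exact hf.two_smul_apply_le x h
    _ ≤ a • (f (x + z) - f x) := by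
      simpa only [sub_eq_add_neg] using hstep (-h) ((neg_le_abs h).trans hh)

end LatticeOrderedModule

section NormedLattice

variable {X Y : Type*} [AddCommGroup X] [Lattice X] [IsOrderedAddMonoid X] [Module ℝ X]
  [NormedAddCommGroup Y] [Lattice Y] [HasSolidNorm Y] [IsOrderedAddMonoid Y] [NormedSpace ℝ Y]
  [PosSMulMono ℝ Y] {f : X → Y}

theorem ConvexOn.norm_apply_add_sub_le (hf : ConvexOn ℝ univ f) (hmono : Monotone f)
    {x h z : X} {a : ℝ} (ha₀ : 0 ≤ a) (ha₁ : a ≤ 1) (hh : |h| ≤ a • z) :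
    ‖f (x + h) - f x‖ ≤ a * ‖f (x + z) - f x‖ :=
  calc ‖f (x + h) - f x‖ ≤ ‖a • (f (x + z) - f x)‖ :=
        HasSolidNorm.solid ((hf.abs_apply_add_sub_le hmono ha₀ ha₁ hh).trans (le_abs_self _))
    _ = a * ‖f (x + z) - f x‖ := by rw [norm_smul, Real.norm_of_nonneg ha₀]

theorem ConvexOn.tendsto_apply_add_of_abs_le (hf : ConvexOn ℝ univ f) (hmono : Monotone f)
    {ι : Type*} {l : Filter ι} {x z : X} {h : ι → X} {a : ι → ℝ} (ha₀ : ∀ i, 0 ≤ a i)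
    (ha₁ : ∀ i, a i ≤ 1) (ha : Tendsto a l (𝓝 0)) (hh : ∀ i, |h i| ≤ a i • z) :
    Tendsto (fun i => f (x + h i)) l (𝓝 (f x)) := by
  rw [tendsto_iff_norm_sub_tendsto_zero]
  refine squeeze_zero (fun _ => norm_nonneg _)
    (fun i => hf.norm_apply_add_sub_le hmono (ha₀ i) (ha₁ i) (hh i)) ?_
  simpa using ha.mul_const ‖f (x + z) - f x‖

end NormedLattice

section BanachLattice

variable {X : Type*} [NormedAddCommGroup X] [Lattice X] [HasSolidNorm X] [IsOrderedAddMonoid X]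
  [NormedSpace ℝ X] [CompleteSpace X] [PosSMulMono ℝ X]

theorem exists_smul_abs_le_of_summable {u : ℕ → X} {c : ℕ → ℝ} (hc : ∀ n, 0 ≤ c n)
    (hs : Summable fun n => c n * ‖u n‖) : ∃ z : X, ∀ n, c n • |u n| ≤ z := by
  have hnonneg : ∀ n, 0 ≤ c n • |u n| := fun n => smul_nonneg (hc n) (abs_nonneg _)
  have hsum : Summable fun n => c n • |u n| :=
    .of_norm <| by simpa [norm_smul, Real.norm_of_nonneg (hc _), norm_abs_eq_norm] using hs
  exact ⟨∑' n, c n • |u n|, fun n => hsum.le_tsum n fun k _ => hnonneg k⟩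

theorem exists_strictMono_abs_le_one_div_smul {u : ℕ → X} (hu : Tendsto u atTop (𝓝 0)) :
    ∃ φ : ℕ → ℕ, StrictMono φ ∧ ∃ z : X, ∀ n, |u (φ n)| ≤ (1 / ((n : ℝ) + 1)) • z := by
  have hev : ∀ n : ℕ, ∀ᶠ k in atTop, ‖u k‖ ≤ (1 / 2 : ℝ) ^ n / ((n : ℝ) + 1) := fun n =>
    (tendsto_zero_iff_norm_tendsto_zero.1 hu).eventually (Iic_mem_nhds (by positivity))
  obtain ⟨φ, hφ, hφu⟩ := extraction_forall_of_eventually hev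
  have hs : Summable fun n : ℕ => ((n : ℝ) + 1) * ‖u (φ n)‖ := by
    refine .of_nonneg_of_le (fun n => by positivity) (fun n => ?_)
      (summable_geometric_of_lt_one (by norm_num) (by norm_num : (1 / 2 : ℝ) < 1))
    rw [← le_div_iff₀' (by positivity)]
    exact hφu n
  obtain ⟨z, hz⟩ := exists_smul_abs_le_of_summable (fun n => by positivity) hs
  refine ⟨φ, hφ, z, fun n => ?_⟩
  have hn : (0 : ℝ) < (n : ℝ) + 1 := by positivity
  simpa [one_div, smul_smul, hn.ne'] using smul_le_smul_of_nonneg_left (hz n) (inv_nonneg.2 hn.le)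

end BanachLattice

theorem convex_monotone_continuous_general
    {X : Type*} [NormedAddCommGroup X] [Lattice X] [HasSolidNorm X]
    [IsOrderedAddMonoid X] [NormedSpace ℝ X] [CompleteSpace X]
    [PosSMulStrictMono ℝ X]
    {Y : Type*} [NormedAddCommGroup Y] [Lattice Y] [HasSolidNorm Y]
    [IsOrderedAddMonoid Y] [NormedSpace ℝ Y]
    [PosSMulStrictMono ℝ Y]
    (S : X → Y)
    (hconv : ∀ x y : X, ∀ a : ℝ, 0 ≤ a → a ≤ 1 →
      S (a • x + (1 - a) • y) ≤ a • S x + (1 - a) • S y)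
    (hmono : ∀ x y : X, x ≤ y → S x ≤ S y) :
    Continuous S := by
  have hS : ConvexOn ℝ univ S := ⟨convex_univ, fun x _ y _ a b ha hb hab => by
    obtain rfl : b = 1 - a := by linarith
    exact hconv x y a ha (by linarith)⟩
  refine continuous_iff_seqContinuous.2 fun x x₀ hx => tendsto_of_subseq_tendsto fun ns hns => ?_
  obtain ⟨φ, -, z, hz⟩ :=
    exists_strictMono_abs_le_one_div_smul (tendsto_sub_nhds_zero_iff.2 (hx.comp hns))
  refine ⟨φ, ?_⟩
  have hlim := hS.tendsto_apply_add_of_abs_le (x := x₀) (fun _ _ => hmono _ _)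
    (fun n => by positivity) (fun n => div_le_one_of_le₀ (by simp) (by positivity))
    tendsto_one_div_add_atTop_nhds_zero_nat hz
  simpa using hlim

/-- A convex monotone operator between Banach lattices is continuous. -/
theorem convex_monotone_continuous
    {X : Type*} [NormedAddCommGroup X] [Lattice X] [HasSolidNorm X]
    [IsOrderedAddMonoid X] [NormedSpace ℝ X] [CompleteSpace X]
    [PosSMulStrictMono ℝ X] [PosSMulReflectLT ℝ X]
    {Y : Type*} [NormedAddCommGroup Y] [Lattice Y] [HasSolidNorm Y]
    [IsOrderedAddMonoid Y] [NormedSpace ℝ Y] [CompleteSpace Y]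
    [PosSMulStrictMono ℝ Y] [PosSMulReflectLT ℝ Y]
    (S : X → Y)
    (hconv : ∀ x y : X, ∀ a : ℝ, 0 ≤ a → a ≤ 1 →
      S (a • x + (1 - a) • y) ≤ a • S x + (1 - a) • S y)
    (hmono : ∀ x y : X, x ≤ y → S x ≤ S y) :
    Continuous S :=
  convex_monotone_continuous_general S hconv hmono
end

section
/- Let c₀ denote the Banach lattice of real sequences converging to 0, equipped with the supremum norm and the coordinatewise order. Define S : c₀ → ℝ by S(x) := sup_{n≥1} |x_n|^n (which is finite for every x ∈ c₀). Then S is convex and continuous, but S is not bounded: with e_k the k-th unit vector one has ‖2e_k‖_∞ = 2 and S(2e_k) = 2^k for every k, so sup_{‖x‖_∞ ≤ 2} |S(x)| = ∞. -/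
/-!
Each term `|x_{n+1}|^{n+1}` is a convex function of `x`, so their supremum `S` is convex, and
for a null sequence the terms tend to `0`, so the supremum is finite. For continuity at `x`,
pick `N` beyond which `|x_n| ≤ 1/2`: for `y` within `1/4` of `x` the terms of index `n ≥ N` of
both sequences lie in `[0, (3/4)^{n+1}]`, which is small, while the finitely many terms of
index `n < N` are uniformly Lipschitz on the bounded set where `x` and `y` live. Finally
`S(2e_{k+1}) = 2^{k+1}` is unbounded in `k`.
-/

open Filter Topology Set

/-- Membership in `c₀`: real sequences (indexed from `1`, with `x 0` ignored by the
operator below) converging to `0`. -/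
def memC0 (x : ℕ → ℝ) : Prop := Tendsto x atTop (𝓝 (0 : ℝ))

/-- The operator `S(x) = sup_{n ≥ 1} |x_n|^n` on `c₀`. -/
noncomputable def supPow (x : ℕ → ℝ) : ℝ := ⨆ n : ℕ, |x (n + 1)| ^ (n + 1)

lemma abs_abs_pow_sub_abs_pow_le_pow {s t q : ℝ} (m : ℕ) (hs : |s| ≤ q) (ht : |t| ≤ q) :
    |(|s| ^ m - |t| ^ m)| ≤ q ^ m :=
  abs_sub_le_of_nonneg_of_le (by positivity) (pow_le_pow_left₀ (abs_nonneg s) hs m)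
    (by positivity) (pow_le_pow_left₀ (abs_nonneg t) ht m)

lemma abs_abs_pow_sub_abs_pow_le {s t R : ℝ} (m : ℕ) (hs : |s| ≤ R) (ht : |t| ≤ R) :
    |(|s| ^ m - |t| ^ m)| ≤ |s - t| * m * R ^ (m - 1) := by
  refine (abs_pow_sub_pow_le _ _ m).trans ?_
  have hmax : max |(|s|)| |(|t|)| ≤ R := by simpa only [abs_abs] using max_le hs ht
  gcongr ?_ * _ * ?_
  exacts [abs_abs_sub_abs_le s t, pow_le_pow_left₀ (by positivity) hmax _]

lemma abs_ciSup_sub_ciSup_le {ι : Sort*} [Nonempty ι] {f g : ι → ℝ} {ε : ℝ}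
    (hg : BddAbove (range g)) (hfg : ∀ i, |f i - g i| ≤ ε) :
    |(⨆ i, f i) - ⨆ i, g i| ≤ ε := by
  have hf : BddAbove (range f) := by
    obtain ⟨M, hM⟩ := hg
    refine ⟨M + ε, forall_mem_range.2 fun i => ?_⟩
    linarith [(abs_le.1 (hfg i)).2, hM (mem_range_self i)]
  refine abs_sub_le_iff.2 ⟨sub_le_iff_le_add.2 <| ciSup_le fun i => ?_,
    sub_le_iff_le_add.2 <| ciSup_le fun i => ?_⟩
  · linarith [(abs_le.1 (hfg i)).2, le_ciSup hg i]
  · linarith [(abs_le.1 (hfg i)).1, le_ciSup hf i]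

lemma tendsto_abs_pow_succ_of_memC0 {x : ℕ → ℝ} (hx : memC0 x) :
    Tendsto (fun n : ℕ => |x (n + 1)| ^ (n + 1)) atTop (𝓝 0) := by
  have habs : Tendsto (fun n => |x (n + 1)|) atTop (𝓝 0) := by
    simpa using (hx.comp (tendsto_add_atTop_nat 1)).abs
  refine squeeze_zero' (Eventually.of_forall fun n => by positivity) ?_ habs
  filter_upwards [habs.eventually (ge_mem_nhds one_pos)] with n hn
  exact pow_le_of_le_one (abs_nonneg _) hn n.succ_ne_zero

lemma bddAbove_abs_pow_succ_of_memC0 {x : ℕ → ℝ} (hx : memC0 x) :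
    BddAbove (range fun n : ℕ => |x (n + 1)| ^ (n + 1)) :=
  (tendsto_abs_pow_succ_of_memC0 hx).bddAbove_range

lemma abs_convex_comb_pow_le (u v : ℝ) {a : ℝ} (ha₀ : 0 ≤ a) (ha₁ : a ≤ 1) (m : ℕ) :
    |a * u + (1 - a) * v| ^ m ≤ a * |u| ^ m + (1 - a) * |v| ^ m := by
  simpa [Real.norm_eq_abs] using ((convexOn_norm convex_univ).pow
    (fun _ _ => norm_nonneg _) m).2 (mem_univ u) (mem_univ v) ha₀ (sub_nonneg.2 ha₁)
    (add_sub_cancel a 1)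

lemma supPow_convex_comb_le {x y : ℕ → ℝ}
    (hx : BddAbove (range fun n : ℕ => |x (n + 1)| ^ (n + 1)))
    (hy : BddAbove (range fun n : ℕ => |y (n + 1)| ^ (n + 1))) {a : ℝ} (ha₀ : 0 ≤ a)
    (ha₁ : a ≤ 1) :
    supPow (fun n => a * x n + (1 - a) * y n) ≤ a * supPow x + (1 - a) * supPow y := by
  refine ciSup_le fun n => (abs_convex_comb_pow_le _ _ ha₀ ha₁ _).trans ?_
  have : 0 ≤ 1 - a := sub_nonneg.2 ha₁
  gcongr
  exacts [le_ciSup hx n, le_ciSup hy n]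

theorem supPow_continuousAt_of_memC0 {x : ℕ → ℝ} (hx : memC0 x) {ε : ℝ} (hε : 0 < ε) :
    ∃ δ : ℝ, 0 < δ ∧ ∀ y : ℕ → ℝ, (∀ n, |y n - x n| ≤ δ) → |supPow y - supPow x| ≤ ε := by
  obtain ⟨N₀, hN₀⟩ : ∃ N, ∀ n ≥ N, |x n| ≤ 1 / 2 :=
    eventually_atTop.1 <| hx.abs.eventually (ge_mem_nhds (by norm_num))
  obtain ⟨N₁, hN₁⟩ := exists_pow_lt_of_lt_one hε (by norm_num : (3 / 4 : ℝ) < 1)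
  obtain ⟨C, hC⟩ := hx.abs.bddAbove_range
  have hC' (n : ℕ) : |x n| ≤ C := hC (mem_range_self n)
  set N := max N₀ N₁
  set R := C + 1
  have hR : 1 ≤ R := by linarith [abs_nonneg (x 0), hC' 0]
  have hL : 0 < ((N : ℝ) + 1) * R ^ N := by positivity
  set δ := min (1 / 4) (ε / (((N : ℝ) + 1) * R ^ N))
  have hδ₁ : δ ≤ 1 / 4 := min_le_left _ _
  have hδ₂ : δ * (((N : ℝ) + 1) * R ^ N) ≤ ε := (le_div_iff₀ hL).1 (min_le_right _ _)
  refine ⟨δ, by positivity, fun y hy => ?_⟩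
  refine abs_ciSup_sub_ciSup_le (bddAbove_abs_pow_succ_of_memC0 hx) fun n => ?_
  have hyx := hy (n + 1)
  have hy_le : |y (n + 1)| ≤ |x (n + 1)| + 1 / 4 := by
    linarith [abs_sub_abs_le_abs_sub (y (n + 1)) (x (n + 1))]
  rcases lt_or_ge n N with hn | hn
  · calc |(|y (n + 1)| ^ (n + 1) - |x (n + 1)| ^ (n + 1))|
        ≤ |y (n + 1) - x (n + 1)| * (n + 1 : ℕ) * R ^ n :=
          abs_abs_pow_sub_abs_pow_le _ (by linarith [hC' (n + 1)])
            (by linarith [hC' (n + 1)])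
      _ ≤ δ * (((N : ℝ) + 1) * R ^ N) := by
          push_cast
          rw [mul_assoc]
          gcongr
      _ ≤ ε := hδ₂
  · have hx_tail : |x (n + 1)| ≤ 1 / 2 := hN₀ _ (by omega)
    calc |(|y (n + 1)| ^ (n + 1) - |x (n + 1)| ^ (n + 1))| ≤ (3 / 4) ^ (n + 1) :=
          abs_abs_pow_sub_abs_pow_le_pow _ (by linarith) (by linarith)
      _ ≤ (3 / 4) ^ N₁ := pow_le_pow_of_le_one (by norm_num) (by norm_num) (by omega)
      _ ≤ ε := hN₁.le

lemma memC0_ite_eq (j : ℕ) (c : ℝ) : memC0 fun m => if m = j then c else 0 :=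
  tendsto_const_nhds.congr' <| (eventually_ne_atTop j).mono fun _ hm => (if_neg hm).symm

lemma supPow_ite_eq (k : ℕ) (c : ℝ) :
    supPow (fun m => if m = k + 1 then c else 0) = |c| ^ (k + 1) := by
  refine le_antisymm (ciSup_le fun n => ?_) ?_
  · rcases eq_or_ne n k with rfl | hn
    · simp
    · simp only [add_left_inj, hn, if_false, abs_zero]
      rw [zero_pow n.succ_ne_zero]
      positivity
  · calc |c| ^ (k + 1) = |if k + 1 = k + 1 then c else 0| ^ (k + 1) := by rw [if_pos rfl]
      _ ≤ _ := le_ciSup (bddAbove_abs_pow_succ_of_memC0 (memC0_ite_eq (k + 1) c)) k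

/-- On the Banach lattice `c₀` (real null sequences with the supremum norm
and coordinatewise order), the operator `S(x) = sup_{n≥1} |x_n|^n` is well defined
(the supremum is finite), convex and continuous, yet unbounded: for the unit vectors
`e_k` one has `‖2e_k‖_∞ = 2` while `S(2e_k) = 2^k`, so `S` is unbounded on the ball of
radius `2`. -/
theorem convex_continuous_not_bounded_on_c0 :
    -- well-definedness: the supremum is finite for every null sequence
    (∀ x : ℕ → ℝ, memC0 x → BddAbove (Set.range fun n : ℕ => |x (n + 1)| ^ (n + 1))) ∧
    -- convexity
    (∀ x y : ℕ → ℝ, memC0 x → memC0 y → ∀ a : ℝ, 0 ≤ a → a ≤ 1 →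
      supPow (fun n => a * x n + (1 - a) * y n) ≤ a * supPow x + (1 - a) * supPow y) ∧
    -- continuity with respect to the supremum norm on `c₀`
    (∀ x : ℕ → ℝ, memC0 x → ∀ ε : ℝ, 0 < ε → ∃ δ : ℝ, 0 < δ ∧
      ∀ y : ℕ → ℝ, memC0 y → (∀ n : ℕ, |y n - x n| ≤ δ) → |supPow y - supPow x| ≤ ε) ∧
    -- the doubled unit vectors: `‖2e_k‖_∞ = 2` and `S(2e_k) = 2^k` (here for `k ≥ 1`)
    (∀ k : ℕ,
      memC0 (fun m : ℕ => if m = k + 1 then (2 : ℝ) else 0) ∧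
      (∀ n : ℕ, |(if n = k + 1 then (2 : ℝ) else 0)| ≤ 2) ∧
      supPow (fun m : ℕ => if m = k + 1 then (2 : ℝ) else 0) = 2 ^ (k + 1)) ∧
    -- hence `S` is not bounded on the ball of radius `2`
    ¬ ∃ M : ℝ, ∀ y : ℕ → ℝ, memC0 y → (∀ n : ℕ, |y n| ≤ 2) → supPow y ≤ M := by
  have unit_vectors (k : ℕ) :
      memC0 (fun m : ℕ => if m = k + 1 then (2 : ℝ) else 0) ∧
      (∀ n : ℕ, |(if n = k + 1 then (2 : ℝ) else 0)| ≤ 2) ∧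
      supPow (fun m : ℕ => if m = k + 1 then (2 : ℝ) else 0) = 2 ^ (k + 1) :=
    ⟨memC0_ite_eq _ _, fun n => by split_ifs <;> norm_num, by simp [supPow_ite_eq]⟩
  refine ⟨fun x hx => bddAbove_abs_pow_succ_of_memC0 hx,
    fun x y hx hy a ha₀ ha₁ => supPow_convex_comb_le (bddAbove_abs_pow_succ_of_memC0 hx)
      (bddAbove_abs_pow_succ_of_memC0 hy) ha₀ ha₁,
    fun x hx ε hε => (supPow_continuousAt_of_memC0 hx hε).imp fun _ hδ =>
      ⟨hδ.1, fun y _ => hδ.2 y⟩,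
    unit_vectors, ?_⟩
  rintro ⟨M, hM⟩
  obtain ⟨k, hk⟩ := pow_unbounded_of_one_lt M one_lt_two
  obtain ⟨hmem, hball, hsup⟩ := unit_vectors k
  have := hM _ hmem hball
  rw [hsup, pow_succ] at this
  linarith [(by positivity : (0 : ℝ) < 2 ^ k)]
end
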